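/- arXiv:1902.09015 — 6 statements merged into one kernel-verified Lean document; each statement's English description precedes it below -/
import Mathlib

section
/- In a binary tree-child phylogenetic network with n leaves, the number h of hybrid nodes satisfies h ≤ n - 1. -/
/-!
Call an arc a *tree arc* if its head has in-degree 1. Tree arcs are backward deterministic, so
two tree paths with a common end are nested; if both start at nodes of in-degree ≠ 1 they start
at the same node. In a tree-child network every non-leaf node has a tree-node child, so from any
node a tree path leads to a leaf. Sending the root and each hybrid node to such a leaf is therefore
injective, whence h + 1 ≤ n.
-/

/-- In-degree of a node in a directed graph given by its arc relation. -/
noncomputable def indeg {V : Type} (A : V → V → Prop) (v : V) : ℕ := Nat.card {u : V // A u v}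

/-- Out-degree of a node in a directed graph given by its arc relation. -/
noncomputable def outdeg {V : Type} (A : V → V → Prop) (v : V) : ℕ := Nat.card {u : V // A v u}

/-- A leaf: degrees (1,0). -/
def IsLeaf {V : Type} (A : V → V → Prop) (v : V) : Prop :=
  indeg A v = 1 ∧ outdeg A v = 0

/-- A tree node: degrees (1,0) (leaf), (0,2) (root) or (1,2) (internal tree node). -/
def IsTreeNode {V : Type} (A : V → V → Prop) (v : V) : Prop :=
  (indeg A v = 1 ∧ outdeg A v = 0) ∨ (indeg A v = 0 ∧ outdeg A v = 2) ∨
    (indeg A v = 1 ∧ outdeg A v = 2)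

/-- A hybrid node: degrees (2,1). -/
def IsHybrid {V : Type} (A : V → V → Prop) (v : V) : Prop :=
  indeg A v = 2 ∧ outdeg A v = 1

/-- A binary tree-child phylogenetic network on the (finite) node set `V`:
a DAG with a single root, all of whose nodes are tree nodes or hybrid nodes,
and where every non-leaf node has a child that is a tree node. -/
structure BTC (V : Type) [Finite V] where
  Arc : V → V → Prop
  acyclic : ∀ v : V, ¬ Relation.TransGen Arc v v
  uniqueRoot : ∃! r : V, indeg Arc r = 0
  binary : ∀ v : V, IsTreeNode Arc v ∨ IsHybrid Arc v
  treeChild : ∀ v : V, 0 < outdeg Arc v → ∃ w : V, Arc v w ∧ IsTreeNode Arc w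

open Relation

theorem Relation.ReflTransGen.total_of_left_unique {α : Type*} {r : α → α → Prop} {a b c : α}
    (U : Relator.LeftUnique r) (ac : ReflTransGen r a c) (bc : ReflTransGen r b c) :
    ReflTransGen r a b ∨ ReflTransGen r b a := by
  have U' : Relator.RightUnique (Function.swap r) := fun _ _ _ h h' => U h h'
  rw [← reflTransGen_swap] at ac bc
  rw [← reflTransGen_swap (r := r) (a := b), ← reflTransGen_swap (r := r) (a := a)]
  exact (ac.total_of_right_unique U' bc).symm

section TreeArc

variable {V : Type} {A : V → V → Prop}

def TreeArc (A : V → V → Prop) (a b : V) : Prop := A a b ∧ indeg A b = 1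

theorem TreeArc.leftUnique : Relator.LeftUnique (TreeArc A) := by
  rintro a a' b ⟨hab, hb⟩ ⟨ha'b, -⟩
  have : Subsingleton {u : V // A u b} := (Nat.card_eq_one_iff_unique.mp hb).1
  exact congrArg Subtype.val (Subsingleton.elim (⟨a, hab⟩ : {u // A u b}) ⟨a', ha'b⟩)

theorem eq_of_reflTransGen_treeArc_of_indeg_ne_one {a b : V}
    (h : ReflTransGen (TreeArc A) a b) (hb : indeg A b ≠ 1) : a = b := by
  rcases h.cases_tail with rfl | ⟨_, _, hb'⟩
  · rfl
  · exact absurd hb'.2 hb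

theorem eq_of_reflTransGen_treeArc_of_same_end {a b l : V}
    (ha : indeg A a ≠ 1) (hb : indeg A b ≠ 1)
    (hal : ReflTransGen (TreeArc A) a l) (hbl : ReflTransGen (TreeArc A) b l) : a = b := by
  rcases hal.total_of_left_unique TreeArc.leftUnique hbl with h | h
  · exact eq_of_reflTransGen_treeArc_of_indeg_ne_one h hb
  · exact (eq_of_reflTransGen_treeArc_of_indeg_ne_one h ha).symm

end TreeArc

namespace BTC

variable {V : Type} [Finite V] (N : BTC V)

theorem wellFounded_transGen_swap : WellFounded (Function.swap (TransGen N.Arc)) :=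
  have : IsTrans V (Function.swap (TransGen N.Arc)) := ⟨fun _ _ _ hab hbc => hbc.trans hab⟩
  have : Std.Irrefl (Function.swap (TransGen N.Arc)) := ⟨N.acyclic⟩
  Finite.wellFounded_of_trans_of_irrefl _

variable {N}

theorem isLeaf_of_outdeg_eq_zero {v : V} (h : outdeg N.Arc v = 0) : IsLeaf N.Arc v := by
  rcases N.binary v with (hl | ⟨-, h2⟩ | ⟨-, h2⟩) | ⟨-, h2⟩
  · exact hl
  all_goals omega

theorem indeg_eq_one_of_isTreeNode_of_arc {v w : V} (hw : IsTreeNode N.Arc w)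
    (hvw : N.Arc v w) : indeg N.Arc w = 1 := by
  have : Nonempty {u // N.Arc u w} := ⟨⟨v, hvw⟩⟩
  have : 0 < indeg N.Arc w := Nat.card_pos
  rcases hw with ⟨h1, -⟩ | ⟨h1, -⟩ | ⟨h1, -⟩ <;> omega

variable (N)

theorem exists_isLeaf_reflTransGen_treeArc (v : V) :
    ∃ l, IsLeaf N.Arc l ∧ ReflTransGen (TreeArc N.Arc) v l := by
  induction v using N.wellFounded_transGen_swap.induction with
  | _ v ih =>
    by_cases h0 : outdeg N.Arc v = 0
    · exact ⟨v, isLeaf_of_outdeg_eq_zero h0, .refl⟩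
    obtain ⟨w, hvw, hw⟩ := N.treeChild v (Nat.pos_of_ne_zero h0)
    obtain ⟨l, hl, hwl⟩ := ih w (.single hvw)
    exact ⟨l, hl, .head ⟨hvw, indeg_eq_one_of_isTreeNode_of_arc hw hvw⟩ hwl⟩

theorem card_indeg_ne_one_le_card_isLeaf :
    Nat.card {v // indeg N.Arc v ≠ 1} ≤ Nat.card {v // IsLeaf N.Arc v} := by
  choose leaf hleaf hpath using N.exists_isLeaf_reflTransGen_treeArc
  refine Nat.card_le_card_of_injective (fun v => ⟨leaf v, hleaf v⟩) ?_
  rintro ⟨a, ha⟩ ⟨b, hb⟩ hab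
  have hab : leaf a = leaf b := congrArg Subtype.val hab
  exact Subtype.ext (eq_of_reflTransGen_treeArc_of_same_end ha hb (hpath a) (hab ▸ hpath b))

theorem card_isHybrid_add_one_le_card_indeg_ne_one :
    Nat.card {v // IsHybrid N.Arc v} + 1 ≤ Nat.card {v // indeg N.Arc v ≠ 1} := by
  obtain ⟨r, hr, -⟩ := N.uniqueRoot
  let f : Option {v // IsHybrid N.Arc v} → {v // indeg N.Arc v ≠ 1} :=
    fun o => o.elim ⟨r, by omega⟩ fun v => ⟨v, by rw [v.2.1]; omega⟩
  have hf : Function.Injective f := by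
    rintro (_ | ⟨v, hv⟩) (_ | ⟨w, hw⟩) h <;> simp only [f, Option.elim, Subtype.mk.injEq] at h
    · rfl
    · rw [h, hw.1] at hr; omega
    · rw [← h, hv.1] at hr; omega
    · simp [h]
  simpa [Finite.card_option] using Nat.card_le_card_of_injective f hf

end BTC

/-- In a binary tree-child phylogenetic network with n leaves, the number h of
hybrid nodes satisfies h ≤ n - 1. -/
theorem stmt1 {V : Type} [Finite V] (N : BTC V) (n h : ℕ)
    (hn : n = Nat.card {v : V // IsLeaf N.Arc v})
    (hh : h = Nat.card {v : V // IsHybrid N.Arc v}) :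
    h ≤ n - 1 := by
  have := N.card_isHybrid_add_one_le_card_indeg_ne_one.trans N.card_indeg_ne_one_le_card_isLeaf
  omega
end

section
/- In a binary tree-child phylogenetic network with n leaves, the number t of tree nodes satisfies t ≤ 3n - 2. -/
section Aux

open Relation Finset

variable {V : Type} [Finite V] {A : V → V → Prop}

/-- Step relation: an arc into a tree node. -/
def SS (A : V → V → Prop) (a b : V) : Prop := A a b ∧ IsTreeNode A b

lemma arc_wf (hac : ∀ v, ¬ TransGen A v v) : WellFounded A := by
  have h1 : IsTrans V (TransGen A) := ⟨fun _ _ _ => TransGen.trans⟩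
  have h2 : IsIrrefl V (TransGen A) := ⟨hac⟩
  exact Subrelation.wf (fun h => TransGen.single h)
    (Finite.wellFounded_of_trans_of_irrefl _)

lemma flip_arc_wf (hac : ∀ v, ¬ TransGen A v v) : WellFounded (Function.swap A) := by
  have hac' : ∀ v, ¬ TransGen (Function.swap A) v v := fun v h =>
    hac v (Relation.transGen_swap.mp h)
  exact arc_wf hac'

lemma indeg_ne_zero (u v : V) (h : A u v) : indeg A v ≠ 0 :=
  Nat.card_ne_zero.mpr ⟨⟨⟨u, h⟩⟩, inferInstance⟩

omit [Finite V] in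
lemma parent_unique {v p p' : V} (h1 : indeg A v = 1) (hp : A p v) (hp' : A p' v) :
    p = p' := by
  obtain ⟨hs, -⟩ := Nat.card_eq_one_iff_unique.mp h1
  exact congrArg Subtype.val (hs.elim ⟨p, hp⟩ ⟨p', hp'⟩)

lemma reach (hac : ∀ v, ¬ TransGen A v v)
    (tc : ∀ v, 0 < outdeg A v → ∃ w, A v w ∧ IsTreeNode A w) :
    ∀ v, IsTreeNode A v → ∃ l, IsLeaf A l ∧ ReflTransGen (SS A) v l := by
  intro v
  induction v using (flip_arc_wf hac).induction with
  | _ v IH =>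
    intro hv
    rcases hv with h | h | h
    · exact ⟨v, ⟨h.1, h.2⟩, ReflTransGen.refl⟩
    · obtain ⟨w, hvw, hw⟩ := tc v (by rw [h.2]; norm_num)
      obtain ⟨l, hl, hwl⟩ := IH w hvw hw
      exact ⟨l, hl, ReflTransGen.head ⟨hvw, hw⟩ hwl⟩
    · obtain ⟨w, hvw, hw⟩ := tc v (by rw [h.2]; norm_num)
      obtain ⟨l, hl, hwl⟩ := IH w hvw hw
      exact ⟨l, hl, ReflTransGen.head ⟨hvw, hw⟩ hwl⟩

lemma uniq (hac : ∀ v, ¬ TransGen A v v) :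
    ∀ l, indeg A l = 1 → ∀ v v', indeg A v ≠ 1 → indeg A v' ≠ 1 →
      TransGen (SS A) v l → TransGen (SS A) v' l → v = v' := by
  intro l
  induction l using (arc_wf hac).induction with
  | _ l IH =>
    intro h1 v v' hv hv' hp hp'
    obtain ⟨p, hvp, hpl⟩ := TransGen.tail'_iff.mp hp
    obtain ⟨p', hvp', hpl'⟩ := TransGen.tail'_iff.mp hp'
    have hpp' : p = p' := parent_unique h1 hpl.1 hpl'.1
    subst hpp'
    have key : TransGen (SS A) v p ∨ TransGen (SS A) v' p → indeg A p = 1 := by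
      rintro (h | h) <;>
      · obtain ⟨q, -, hqp⟩ := TransGen.tail'_iff.mp h
        rcases hqp.2 with hh | hh | hh
        · exact hh.1
        · exact absurd hh.1 (indeg_ne_zero q p hqp.1)
        · exact hh.1
    rcases reflTransGen_iff_eq_or_transGen.mp hvp with rfl | hT
    · rcases reflTransGen_iff_eq_or_transGen.mp hvp' with rfl | hT'
      · rfl
      · exact absurd (key (Or.inr hT')) hv
    · rcases reflTransGen_iff_eq_or_transGen.mp hvp' with rfl | hT'
      · exact absurd (key (Or.inl hT)) hv'
      · exact IH p hpl.1 (key (Or.inl hT)) v v' hv hv' hT hT'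

omit [Finite V] in
lemma handshake [Fintype V] (A : V → V → Prop) :
    ∑ v : V, outdeg A v = ∑ v : V, indeg A v := by
  classical
  have e : (Σ v : V, {u // A v u}) ≃ (Σ v : V, {u // A u v}) :=
    { toFun := fun x => ⟨x.2.1, x.1, x.2.2⟩
      invFun := fun x => ⟨x.2.1, x.1, x.2.2⟩
      left_inv := fun _ => rfl
      right_inv := fun _ => rfl }
  calc ∑ v : V, outdeg A v = ∑ v : V, Fintype.card {u // A v u} := by
        simp [outdeg, Nat.card_eq_fintype_card]
    _ = Fintype.card (Σ v : V, {u // A v u}) := Fintype.card_sigma.symm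
    _ = Fintype.card (Σ v : V, {u // A u v}) := Fintype.card_congr e
    _ = ∑ v : V, Fintype.card {u // A u v} := Fintype.card_sigma
    _ = ∑ v : V, indeg A v := by simp [indeg, Nat.card_eq_fintype_card]

omit [Finite V] in
lemma sum_filter_const [Fintype V] (p : V → Prop) [DecidablePred p] (f : V → ℕ) (c : ℕ)
    (h : ∀ v, p v → f v = c) :
    ∑ v ∈ univ.filter p, f v = c * (univ.filter p).card := by
  rw [Finset.sum_congr rfl (fun v hv => h v (Finset.mem_filter.mp hv).2),
    Finset.sum_const, smul_eq_mul, mul_comm]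

end Aux

/-- In a binary tree-child phylogenetic network with n leaves, the number t of
tree nodes satisfies t ≤ 3n - 2. -/
theorem stmt2 {V : Type} [Finite V] (N : BTC V) (n t : ℕ)
    (hn : n = Nat.card {v : V // IsLeaf N.Arc v})
    (ht : t = Nat.card {v : V // IsTreeNode N.Arc v}) :
    t ≤ 3 * n - 2 := by
  classical
  cases nonempty_fintype V
  -- the four degree classes
  set fL := Finset.univ.filter (fun v : V => indeg N.Arc v = 1 ∧ outdeg N.Arc v = 0) with hfL
  set fR := Finset.univ.filter (fun v : V => indeg N.Arc v = 0 ∧ outdeg N.Arc v = 2) with hfR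
  set fI := Finset.univ.filter (fun v : V => indeg N.Arc v = 1 ∧ outdeg N.Arc v = 2) with hfI
  set fH := Finset.univ.filter (fun v : V => indeg N.Arc v = 2 ∧ outdeg N.Arc v = 1) with hfH
  -- n is the cardinality of fL
  have hn' : n = fL.card := by
    rw [hn, Nat.card_eq_fintype_card, Fintype.card_subtype, hfL]
    congr 1
    ext v
    rw [Finset.mem_filter]
    simp [IsLeaf]
  -- the root
  obtain ⟨r, hr0, hru⟩ := N.uniqueRoot
  have hroot : ∀ v : V, indeg N.Arc v = 0 → indeg N.Arc v = 0 ∧ outdeg N.Arc v = 2 := by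
    intro v hv
    refine ⟨hv, ?_⟩
    rcases N.binary v with (⟨h1, h2⟩ | ⟨h1, h2⟩ | ⟨h1, h2⟩) | ⟨h1, h2⟩ <;> omega
  have hfRr : fR = {r} := by
    ext v
    simp only [hfR, Finset.mem_filter, Finset.mem_univ, true_and, Finset.mem_singleton]
    constructor
    · intro h; exact hru v h.1
    · rintro rfl; exact hroot _ hr0
  have hR1 : fR.card = 1 := by rw [hfRr]; simp
  -- disjointness of classes
  have hdis : ∀ (p q : V → Prop) (_ : ∀ v, p v → q v → False),
      Disjoint (Finset.univ.filter p) (Finset.univ.filter q) := by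
    intro p q h
    rw [Finset.disjoint_left]
    intro a ha hb
    exact h a (Finset.mem_filter.mp ha).2 (Finset.mem_filter.mp hb).2
  have dRI : Disjoint fR fI := by
    rw [Finset.disjoint_left]
    intro a ha hb
    rw [hfR, Finset.mem_filter] at ha
    rw [hfI, Finset.mem_filter] at hb
    omega
  have dIH : Disjoint fI fH := by
    rw [Finset.disjoint_left]
    intro a ha hb
    rw [hfI, Finset.mem_filter] at ha
    rw [hfH, Finset.mem_filter] at hb
    omega
  have dRH : Disjoint fR fH := by
    rw [Finset.disjoint_left]
    intro a ha hb
    rw [hfR, Finset.mem_filter] at ha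
    rw [hfH, Finset.mem_filter] at hb
    omega
  have dLR : Disjoint fL fR := by
    rw [Finset.disjoint_left]
    intro a ha hb
    rw [hfL, Finset.mem_filter] at ha
    rw [hfR, Finset.mem_filter] at hb
    omega
  have dLI : Disjoint fL fI := by
    rw [Finset.disjoint_left]
    intro a ha hb
    rw [hfL, Finset.mem_filter] at ha
    rw [hfI, Finset.mem_filter] at hb
    omega
  have dLH : Disjoint fL fH := by
    rw [Finset.disjoint_left]
    intro a ha hb
    rw [hfL, Finset.mem_filter] at ha
    rw [hfH, Finset.mem_filter] at hb
    omega
  -- t counts fL ∪ fR ∪ fI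
  have ht' : t = fL.card + fR.card + fI.card := by
    rw [ht, Nat.card_eq_fintype_card, Fintype.card_subtype]
    have h1 : Finset.univ.filter (fun v : V => IsTreeNode N.Arc v) = (fL ∪ fR) ∪ fI := by
      ext v
      rw [Finset.mem_filter]
      simp only [hfL, hfR, hfI, Finset.mem_filter, Finset.mem_univ, true_and,
        Finset.mem_union, IsTreeNode]
      tauto
    rw [h1, Finset.card_union_of_disjoint (by
        rw [Finset.disjoint_union_left]; exact ⟨dLI, dRI⟩),
      Finset.card_union_of_disjoint dLR]
  -- partition of the vertex set
  have hpart : (Finset.univ : Finset V) = fL ∪ (fR ∪ (fI ∪ fH)) := by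
    ext v
    simp only [hfL, hfR, hfI, hfH, Finset.mem_filter, Finset.mem_univ, true_and,
      Finset.mem_union, true_iff]
    rcases N.binary v with h | h
    · rcases h with h | h | h
      · exact Or.inl h
      · exact Or.inr (Or.inl h)
      · exact Or.inr (Or.inr (Or.inl h))
    · exact Or.inr (Or.inr (Or.inr h))
  -- handshake, computed classwise
  have d1 : Disjoint fL (fR ∪ (fI ∪ fH)) := by
    rw [Finset.disjoint_union_right, Finset.disjoint_union_right]
    exact ⟨dLR, dLI, dLH⟩
  have d2 : Disjoint fR (fI ∪ fH) := by
    rw [Finset.disjoint_union_right]; exact ⟨dRI, dRH⟩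
  have hh := handshake N.Arc
  rw [show (Finset.univ : Finset V) = fL ∪ (fR ∪ (fI ∪ fH)) from hpart,
    Finset.sum_union d1, Finset.sum_union d2, Finset.sum_union dIH,
    Finset.sum_union d1, Finset.sum_union d2, Finset.sum_union dIH] at hh
  have sLo : ∑ v ∈ fL, outdeg N.Arc v = 0 * fL.card := by
    rw [hfL]; exact sum_filter_const _ _ _ (fun v hv => hv.2)
  have sRo : ∑ v ∈ fR, outdeg N.Arc v = 2 * fR.card := by
    rw [hfR]; exact sum_filter_const _ _ _ (fun v hv => hv.2)
  have sIo : ∑ v ∈ fI, outdeg N.Arc v = 2 * fI.card := by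
    rw [hfI]; exact sum_filter_const _ _ _ (fun v hv => hv.2)
  have sHo : ∑ v ∈ fH, outdeg N.Arc v = 1 * fH.card := by
    rw [hfH]; exact sum_filter_const _ _ _ (fun v hv => hv.2)
  have sLi : ∑ v ∈ fL, indeg N.Arc v = 1 * fL.card := by
    rw [hfL]; exact sum_filter_const _ _ _ (fun v hv => hv.1)
  have sRi : ∑ v ∈ fR, indeg N.Arc v = 0 * fR.card := by
    rw [hfR]; exact sum_filter_const _ _ _ (fun v hv => hv.1)
  have sIi : ∑ v ∈ fI, indeg N.Arc v = 1 * fI.card := by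
    rw [hfI]; exact sum_filter_const _ _ _ (fun v hv => hv.1)
  have sHi : ∑ v ∈ fH, indeg N.Arc v = 2 * fH.card := by
    rw [hfH]; exact sum_filter_const _ _ _ (fun v hv => hv.1)
  rw [sLo, sRo, sIo, sHo, sLi, sRi, sIi, sHi] at hh
  -- the injection from hybrids-and-root to leaves
  have hsrc : ∀ v : V, (indeg N.Arc v = 0 ∨ IsHybrid N.Arc v) →
      ∃ l, IsLeaf N.Arc l ∧ Relation.TransGen (SS N.Arc) v l := by
    intro v hv
    have houtv : 0 < outdeg N.Arc v := by
      rcases hv with h0 | hh'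
      · have := (hroot v h0).2; omega
      · have := hh'.2; omega
    obtain ⟨w, hvw, hw⟩ := N.treeChild v houtv
    obtain ⟨l, hl, hwl⟩ := reach N.acyclic N.treeChild w hw
    exact ⟨l, hl, Relation.TransGen.head' ⟨hvw, hw⟩ hwl⟩
  let F : {v : V // indeg N.Arc v = 0 ∨ IsHybrid N.Arc v} → {l : V // IsLeaf N.Arc l} :=
    fun x => ⟨Classical.choose (hsrc x.1 x.2), (Classical.choose_spec (hsrc x.1 x.2)).1⟩
  have Finj : Function.Injective F := by
    rintro ⟨v, hv⟩ ⟨v', hv'⟩ hFeq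
    have hl := Classical.choose_spec (hsrc v hv)
    have hl' := Classical.choose_spec (hsrc v' hv')
    have heq : Classical.choose (hsrc v hv) = Classical.choose (hsrc v' hv') :=
      congrArg Subtype.val hFeq
    have hne : indeg N.Arc v ≠ 1 := by
      rcases hv with h | h
      · omega
      · have := h.1; omega
    have hne' : indeg N.Arc v' ≠ 1 := by
      rcases hv' with h | h
      · omega
      · have := h.1; omega
    exact Subtype.ext (uniq N.acyclic _ hl.1.1 v v' hne hne' hl.2 (heq ▸ hl'.2))
  have hinj : Nat.card {v : V // indeg N.Arc v = 0 ∨ IsHybrid N.Arc v}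
      ≤ Nat.card {l : V // IsLeaf N.Arc l} := Nat.card_le_card_of_injective F Finj
  have hsrccard : Nat.card {v : V // indeg N.Arc v = 0 ∨ IsHybrid N.Arc v} = 1 + fH.card := by
    rw [Nat.card_eq_fintype_card, Fintype.card_subtype]
    have h1 : Finset.univ.filter (fun v : V => indeg N.Arc v = 0 ∨ IsHybrid N.Arc v)
        = {r} ∪ fH := by
      ext v
      rw [Finset.mem_filter]
      simp only [Finset.mem_filter, Finset.mem_univ, true_and, Finset.mem_union,
        Finset.mem_singleton, hfH, IsHybrid]
      constructor
      · rintro (h0 | hh')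
        · exact Or.inl (hru v h0)
        · exact Or.inr hh'
      · rintro (rfl | hh')
        · exact Or.inl hr0
        · exact Or.inr hh'
    rw [h1, Finset.card_union_of_disjoint (by
      rw [Finset.disjoint_left]
      intro a ha hb
      rw [Finset.mem_singleton] at ha
      subst ha
      have := (Finset.mem_filter.mp hb).2
      omega)]
    simp
  rw [hsrccard, ← hn] at hinj
  omega
end

section
/- For every leaf ℓ of a binary tree-child phylogenetic network, there is a unique TH-path ending at ℓ, i.e., a unique maximal pre-TH-path u_1, …, u_r = ℓ. -/
/-- A pre-TH-path for a leaf ℓ: a directed path u_1,…,u_r = ℓ of tree nodes such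
that for each i < r the child of u_i other than u_{i+1} is a hybrid node, and
these hybrid children are pairwise distinct. -/
def IsPreTHPath {V : Type} (A : V → V → Prop) (ℓ : V) (p : List V) : Prop :=
  p ≠ [] ∧ p.getLast? = some ℓ ∧
  p.Chain' (fun a b => A a b) ∧
  (∀ u ∈ p, IsTreeNode A u) ∧
  (∀ i, (hi : i + 1 < p.length) →
    ∀ v : V, A (p[i]'(by omega)) v → v ≠ p[i+1]'hi → IsHybrid A v) ∧
  (∀ i j, (hi : i + 1 < p.length) → (hj : j + 1 < p.length) → i ≠ j →
    ∀ v w : V, A (p[i]'(by omega)) v → v ≠ p[i+1]'hi →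
      A (p[j]'(by omega)) w → w ≠ p[j+1]'hj → v ≠ w)

/-- A TH-path: a maximal pre-TH-path (it cannot be extended by prepending). -/
def IsTHPath {V : Type} (A : V → V → Prop) (ℓ : V) (p : List V) : Prop :=
  IsPreTHPath A ℓ p ∧ ∀ u : V, ¬ IsPreTHPath A ℓ (u :: p)

section AuxTH

variable {V : Type} [Finite V] {A : V → V → Prop}

lemma indeg_pos' {u v : V} (h : A u v) : 0 < indeg A v := by
  have : Nonempty {u : V // A u v} := ⟨⟨u, h⟩⟩
  simpa [indeg] using Nat.card_pos

lemma parent_unique_s6 {u u' v : V} (hle : indeg A v ≤ 1) (h : A u v) (h' : A u' v) : u = u' := by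
  by_contra hne
  have hnt : Nontrivial {w : V // A w v} := ⟨⟨⟨u, h⟩, ⟨u', h'⟩, by simpa using hne⟩⟩
  have h2 : 1 < indeg A v := Finite.one_lt_card_iff_nontrivial.mpr hnt
  omega

lemma IsTreeNode.indeg_le_one {v : V} (h : IsTreeNode A v) : indeg A v ≤ 1 := by
  rcases h with ⟨h, _⟩ | ⟨h, _⟩ | ⟨h, _⟩ <;> omega

lemma preTH_tail {ℓ u : V} {p : List V} (hp : p ≠ [])
    (h : IsPreTHPath A ℓ (u :: p)) : IsPreTHPath A ℓ p := by
  obtain ⟨-, hlast, hchain, hmem, hhyb, hdist⟩ := h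
  refine ⟨hp, ?_, hchain.tail, fun x hx => hmem x (List.mem_cons_of_mem _ hx), ?_, ?_⟩
  · cases p with
    | nil => exact absurd rfl hp
    | cons a t => simpa [List.getLast?_cons_cons] using hlast
  · intro i hi v hv hne
    have := hhyb (i + 1) (by simp only [List.length_cons]; omega) v
      (by simpa using hv) (by simpa using hne)
    exact this
  · intro i j hi hj hij v w hv hvne hw hwne
    exact hdist (i + 1) (j + 1) (by simp only [List.length_cons]; omega)
      (by simp only [List.length_cons]; omega) (by omega) v w
      (by simpa using hv) (by simpa using hvne) (by simpa using hw) (by simpa using hwne)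

lemma preTH_drop {ℓ : V} :
    ∀ (k : ℕ) (p : List V), IsPreTHPath A ℓ p → k < p.length →
      IsPreTHPath A ℓ (p.drop k) := by
  intro k
  induction k with
  | zero => intro p h _; simpa using h
  | succ k ih =>
    intro p h hk
    match p with
    | [] => simp at hk
    | [u] => simp at hk
    | u :: a :: t =>
      have h' := preTH_tail (by simp) h
      simpa using ih (a :: t) h' (by simp only [List.length_cons] at hk ⊢; omega)

lemma preTH_eq {ℓ : V} :
    ∀ (q p : List V), IsPreTHPath A ℓ p → IsPreTHPath A ℓ q →
      p.length = q.length → p = q := by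
  intro q
  induction q with
  | nil => intro p hp hq _; exact absurd rfl hq.1
  | cons c q' ih =>
    intro p hp hq hlen
    cases p with
    | nil => exact absurd rfl hp.1
    | cons d p' =>
      cases q' with
      | nil =>
        have hp' : p' = [] := by
          cases p' with
          | nil => rfl
          | cons a t => exfalso; simp only [List.length_cons, List.length_nil] at hlen; omega
        subst hp'
        have h1 : d = ℓ := by simpa using hp.2.1
        have h2 : c = ℓ := by simpa using hq.2.1
        rw [h1, h2]
      | cons e q'' =>
        have hp'ne : p' ≠ [] := by
          intro h; subst h; simp at hlen
        have hpp' : IsPreTHPath A ℓ p' := preTH_tail hp'ne hp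
        have hqq' : IsPreTHPath A ℓ (e :: q'') := preTH_tail (by simp) hq
        have heq : p' = e :: q'' := ih p' hpp' hqq' (by
          simp only [List.length_cons] at hlen ⊢; omega)
        subst heq
        have hde : A d e := (List.isChain_cons_cons.mp hp.2.2.1).1
        have hce : A c e := (List.isChain_cons_cons.mp hq.2.2.1).1
        have htn : IsTreeNode A e := hq.2.2.2.1 e (by simp)
        rw [parent_unique_s6 htn.indeg_le_one hde hce]

end AuxTH

/-- For every leaf ℓ of a binary tree-child phylogenetic network, there is a
unique TH-path ending at ℓ. -/
theorem stmt6 {V : Type} [Finite V] (N : BTC V) (ℓ : V) (hℓ : IsLeaf N.Arc ℓ) :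
    ∃! p : List V, IsTHPath N.Arc ℓ p := by
  classical
  have _inst := Fintype.ofFinite V
  -- [ℓ] is a pre-TH-path
  have hℓtree : IsTreeNode N.Arc ℓ := Or.inl hℓ
  have hsingle : IsPreTHPath N.Arc ℓ [ℓ] := by
    refine ⟨by simp, by simp, List.isChain_singleton ℓ, ?_, ?_, ?_⟩
    · intro x hx; simp at hx; subst hx; exact hℓtree
    · intro i hi; simp at hi
    · intro i j hi hj; simp at hi
  -- bounded length
  have hbound : ∀ p : List V, IsPreTHPath N.Arc ℓ p → p.length ≤ Fintype.card V := by
    intro p hp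
    have hchain : p.Chain' (Relation.TransGen N.Arc) :=
      List.IsChain.imp (fun _ _ h => Relation.TransGen.single h) hp.2.2.1
    have hpw : p.Pairwise (Relation.TransGen N.Arc) := by
      exact List.isChain_iff_pairwise.mp hchain
    have hnd : p.Nodup := by
      refine hpw.imp ?_
      intro a b hab heq
      exact N.acyclic a (heq ▸ hab)
    exact hnd.length_le_card
  set S : Set ℕ := {n | ∃ p : List V, IsPreTHPath N.Arc ℓ p ∧ p.length = n} with hS
  have hS1 : (1 : ℕ) ∈ S := ⟨[ℓ], hsingle, rfl⟩
  have hbdd : BddAbove S := ⟨Fintype.card V, by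
    rintro n ⟨p, hp, rfl⟩; exact hbound p hp⟩
  have hmem : sSup S ∈ S := Nat.sSup_mem ⟨1, hS1⟩ hbdd
  obtain ⟨p₀, hp₀, hlen₀⟩ := hmem
  have hmax : ∀ q : List V, IsPreTHPath N.Arc ℓ q → q.length ≤ p₀.length := by
    intro q hq
    rw [hlen₀]
    exact le_csSup hbdd ⟨q, hq, rfl⟩
  refine ⟨p₀, ⟨hp₀, fun u hu => ?_⟩, ?_⟩
  · have := hmax _ hu
    simp only [List.length_cons] at this
    omega
  · intro q hq
    have hqlen := hmax q hq.1
    rcases lt_or_eq_of_le hqlen with hlt | heq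
    · exfalso
      have hqpos : 0 < q.length := List.length_pos_iff.mpr hq.1.1
      set k := p₀.length - q.length - 1 with hk
      have hk1 : k + 1 < p₀.length := by omega
      have hdrop' : IsPreTHPath N.Arc ℓ (p₀.drop (k + 1)) :=
        preTH_drop (k + 1) p₀ hp₀ hk1
      have hdeq : p₀.drop (k + 1) = q := by
        refine preTH_eq q _ hdrop' hq.1 ?_
        simp only [List.length_drop]
        omega
      have hcons : p₀.drop k = p₀[k] :: p₀.drop (k + 1) :=
        List.drop_eq_getElem_cons (by omega)
      have hdropk : IsPreTHPath N.Arc ℓ (p₀.drop k) :=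
        preTH_drop k p₀ hp₀ (by omega)
      rw [hcons, hdeq] at hdropk
      exact hq.2 _ hdropk
    · exact preTH_eq p₀ q hq.1 hp₀ heq
end

section
/- Let N be a non-trivial binary tree-child phylogenetic network (having more than one node) and ℓ any leaf of N. Then the first node of the TH-path of ℓ is not the root of N. -/
section Aux

variable {V : Type} [Finite V]

private lemma btc_card_two_other {S : V → Prop} (h : Nat.card {u : V // S u} = 2)
    {a : V} (ha : S a) : ∃ b, S b ∧ b ≠ a := by
  have : Nontrivial {u : V // S u} :=
    Finite.one_lt_card_iff_nontrivial.mp (by omega)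
  obtain ⟨b, hb⟩ := exists_ne (⟨a, ha⟩ : {u : V // S u})
  exact ⟨b.1, b.2, fun h' => hb (Subtype.ext h')⟩

private lemma btc_no_child {A : V → V → Prop} {v : V} (h : outdeg A v = 0) {w : V}
    (hw : A v w) : False := by
  have : Nonempty {u : V // A v u} := ⟨⟨w, hw⟩⟩
  have := Nat.card_pos (α := {u : V // A v u})
  unfold outdeg at h
  omega

end Aux

/-- In a non-trivial binary tree-child network (more than one node), the first
node of the TH-path of any leaf ℓ is not the root. -/
theorem stmt7 {V : Type} [Finite V] (N : BTC V) (hV : 1 < Nat.card V)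
    (ℓ : V) (hℓ : IsLeaf N.Arc ℓ) (p : List V) (hp : IsTHPath N.Arc ℓ p) :
    ∀ r : V, indeg N.Arc r = 0 → p.head? ≠ some r := by
  intro ρ hρ hhead
  obtain ⟨⟨hne, hlast, hchain, htree, hhyb, hdist⟩, -⟩ := hp
  set A := N.Arc with hA
  have hlen : 0 < p.length := List.length_pos_iff.mpr hne
  have hu0 : p[0] = ρ := by
    have := List.head?_eq_getElem? (l := p)
    rw [hhead] at this
    have := this.symm
    rw [List.getElem?_eq_getElem hlen] at this
    exact Option.some.inj this
  have hulast : p[p.length - 1]'(by omega) = ℓ := by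
    have := (List.getLast?_eq_getElem? (l := p)).symm
    rw [hlast] at this
    rw [List.getElem?_eq_getElem (by omega)] at this
    exact Option.some.inj this
  -- unique root
  obtain ⟨r0, hr0, hr0u⟩ := N.uniqueRoot
  have hroot : ∀ x : V, indeg A x = 0 → x = ρ := by
    intro x hx
    rw [hr0u x hx, hr0u ρ hρ]
  -- every non-root node has a parent
  have hparent : ∀ x : V, x ≠ ρ → ∃ y, A y x := by
    intro x hx
    have h0 : indeg A x ≠ 0 := fun h => hx (hroot x h)
    unfold indeg at h0
    obtain ⟨⟨y, hy⟩⟩ := (Nat.card_ne_zero.mp h0).1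
    exact ⟨y, hy⟩
  -- well-foundedness of ancestry
  have : IsIrrefl V (Relation.TransGen A) := ⟨fun a h => N.acyclic a h⟩
  have hWF : WellFounded (Relation.TransGen A) :=
    Finite.wellFounded_of_trans_of_irrefl _
  -- every node is reachable from the root
  have hreach : ∀ x : V, Relation.ReflTransGen A ρ x := by
    intro x
    induction x using WellFounded.induction hWF with
    | _ x ih =>
      by_cases hx : x = ρ
      · subst hx; exact Relation.ReflTransGen.refl
      · obtain ⟨y, hy⟩ := hparent x hx
        exact (ih y (Relation.TransGen.single hy)).tail hy
  have harc : ∀ i, (hi : i + 1 < p.length) → A (p[i]'(by omega)) (p[i+1]'hi) := by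
    intro i hi
    have := List.isChain_iff_getElem.mp hchain i (by omega)
    simpa using this
  -- hybrid nodes differ from tree nodes
  have hhyb_ne_tree : ∀ x y : V, IsHybrid A x → IsTreeNode A y → x ≠ y := by
    rintro x y ⟨hx1, hx2⟩ hy rfl
    rcases hy with ⟨h1, h2⟩ | ⟨h1, h2⟩ | ⟨h1, h2⟩ <;> omega
  -- the key structural lemma: anything reachable from the root is a spine node
  -- or a descendant of an off-spine child
  have hB : ∀ x : V, Relation.ReflTransGen A ρ x →
      (∃ j, ∃ hj : j < p.length, x = p[j]) ∨
      (∃ k, ∃ y, (∃ hk : k + 1 < p.length, A (p[k]'(by omega)) y ∧ y ≠ p[k+1]'hk) ∧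
        Relation.ReflTransGen A y x) := by
    intro x hx
    induction hx with
    | refl => exact Or.inl ⟨0, hlen, hu0.symm⟩
    | @tail b c hab hbc ih =>
      rcases ih with ⟨j, hj, rfl⟩ | ⟨k, y, hoff, hyb⟩
      · by_cases hjl : j + 1 < p.length
        · by_cases hc : c = p[j+1]'hjl
          · exact Or.inl ⟨j + 1, hjl, hc⟩
          · exact Or.inr ⟨j, c, ⟨hjl, hbc, hc⟩, Relation.ReflTransGen.refl⟩
        · have hjeq : j = p.length - 1 := by omega
          subst hjeq
          rw [hulast] at hbc
          exact absurd hbc (fun h => btc_no_child hℓ.2 h)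
      · exact Or.inr ⟨k, y, hoff, hyb.tail hbc⟩
  -- the path has length ≥ 2
  have hlen2 : 1 < p.length := by
    by_contra h
    have h1 : p.length = 1 := by omega
    have : ℓ = ρ := by rw [← hu0, ← hulast]; simp [h1]
    rw [this] at hℓ
    have := hℓ.1
    rw [hρ] at this
    omega
  -- the root has out-degree two, so it has an off-spine child
  have hout2 : outdeg A ρ = 2 := by
    rcases N.binary ρ with (⟨h1, h2⟩ | ⟨h1, h2⟩ | ⟨h1, h2⟩) | ⟨h1, h2⟩ <;>
      first | exact h2 | (rw [hρ] at h1; omega)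
  -- set of off-spine children
  set S : Set V := {x | ∃ k, ∃ hk : k + 1 < p.length, A (p[k]'(by omega)) x ∧ x ≠ p[k+1]'hk}
    with hS
  have hSne : S.Nonempty := by
    obtain ⟨b, hb, hbne⟩ := btc_card_two_other (S := fun w => A ρ w) hout2
      (a := p[1]'hlen2) (by rw [← hu0]; exact harc 0 hlen2)
    exact ⟨b, 0, hlen2, by rw [hu0]; exact hb, hbne⟩
  obtain ⟨m, hmS, hmin⟩ := hWF.has_min S hSne
  obtain ⟨i, hi, him, hmne⟩ := hmS
  -- m is hybrid, so it has a second parent w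
  have hmhyb : IsHybrid A m := hhyb i hi m him hmne
  obtain ⟨w, hwm, hwne⟩ := btc_card_two_other (S := fun u => A u m) hmhyb.1
    (a := p[i]'(by omega)) him
  rcases hB w (hreach w) with ⟨j, hj, rfl⟩ | ⟨k, y, hoff, hyw⟩
  · -- w is a spine node p[j]
    by_cases hjl : j + 1 < p.length
    · have hmne' : m ≠ p[j+1]'hjl :=
        hhyb_ne_tree m _ hmhyb (htree _ (List.getElem_mem hjl))
      have hij : i ≠ j := fun h => hwne (by subst h; rfl)
      exact absurd rfl (hdist i j hi hjl hij m m him hmne hwm hmne')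
    · have hjeq : j = p.length - 1 := by omega
      subst hjeq
      rw [hulast] at hwm
      exact btc_no_child hℓ.2 hwm
  · -- w descends from another off-spine child y: contradicts minimality of m
    exact hmin y ⟨k, hoff⟩ (Relation.TransGen.tail' hyw hwm)
end

section
/- In a binary tree-child phylogenetic network with n leaves and h hybrid nodes, the number of tree nodes that have neither a hybrid parent nor a hybrid sibling equals 2n - 2h - 1. -/
/-- A tree node has a hybrid parent. -/
def HasHybridParent {V : Type} (A : V → V → Prop) (u : V) : Prop :=
  ∃ w : V, IsHybrid A w ∧ A w u

/-- A node has a hybrid sibling (a hybrid node sharing a parent with it). -/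
def HasHybridSibling {V : Type} (A : V → V → Prop) (u : V) : Prop :=
  ∃ w x : V, IsHybrid A w ∧ w ≠ u ∧ A x u ∧ A x w

/-!
Counting arc heads and tails gives `|V| + 1 = 2n + 2h`, hence `2n + h - 1` tree nodes. The tree
nodes with a hybrid parent are the children of the `h` hybrid nodes. The tree nodes with a hybrid
sibling correspond to the `2h` arcs `x → w` into hybrid nodes: `x` has out-degree 2 and a tree
child, which is the sibling of `w`. No tree node is in both classes, since a hybrid node has a
single child. This leaves `2n + h - 1 - 3h` tree nodes.
-/

open Finset

theorem Nat.card_eq_of_existsUnique {α β : Type*} (R : α → β → Prop)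
    (h₁ : ∀ a, ∃! b, R a b) (h₂ : ∀ b, ∃! a, R a b) : Nat.card α = Nat.card β := by
  choose f hf hfu using h₁
  refine Nat.card_eq_of_bijective f ⟨fun a a' h => ?_, fun b => ?_⟩
  · exact (h₂ (f a)).unique (hf a) (h ▸ hf a')
  · obtain ⟨a, ha, -⟩ := h₂ b
    exact ⟨a, (hfu a b ha).symm⟩

theorem Nat.card_subtype_eq_sum_ite {α : Type*} [Fintype α] (p : α → Prop) [DecidablePred p] :
    Nat.card {a // p a} = ∑ a, if p a then 1 else 0 := by
  rw [Nat.card_eq_fintype_card, Fintype.card_subtype, sum_boole, Nat.cast_id]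

theorem Nat.card_subtype_and_not_or_add {α : Type*} [Finite α] (p q r : α → Prop)
    (hqr : ∀ a, p a → q a → ¬ r a) :
    Nat.card {a // p a ∧ ¬ q a ∧ ¬ r a} + Nat.card {a // p a ∧ q a} +
      Nat.card {a // p a ∧ r a} = Nat.card {a // p a} := by
  classical
  have := Fintype.ofFinite α
  simp only [Nat.card_subtype_eq_sum_ite, ← sum_add_distrib]
  refine sum_congr rfl fun a _ => ?_
  by_cases hp : p a <;> by_cases hq : q a <;> by_cases hr : r a <;> simp_all

section Degrees

variable {V : Type} {A : V → V → Prop}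

theorem sum_indeg_eq_sum_outdeg [Fintype V] :
    ∑ v, indeg A v = ∑ v, outdeg A v := by
  classical
  simp only [indeg, outdeg, Nat.card_subtype_eq_sum_ite]
  exact sum_comm

theorem indeg_pos_of_arc [Finite V] {u v : V} (h : A u v) : 0 < indeg A v :=
  have : Nonempty {u // A u v} := ⟨⟨u, h⟩⟩
  Nat.card_pos

theorem outdeg_pos_of_arc [Finite V] {u v : V} (h : A u v) : 0 < outdeg A u :=
  have : Nonempty {v // A u v} := ⟨⟨v, h⟩⟩
  Nat.card_pos

theorem eq_of_arc_of_indeg_eq_one {v x y : V} (hv : indeg A v = 1) (hx : A x v) (hy : A y v) :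
    x = y :=
  congrArg Subtype.val <|
    (Nat.card_eq_one_iff_unique.mp hv).1.elim (⟨x, hx⟩ : {u // A u v}) ⟨y, hy⟩

theorem eq_of_arc_of_outdeg_eq_one {v x y : V} (hv : outdeg A v = 1) (hx : A v x) (hy : A v y) :
    x = y :=
  congrArg Subtype.val <|
    (Nat.card_eq_one_iff_unique.mp hv).1.elim (⟨x, hx⟩ : {u // A v u}) ⟨y, hy⟩

theorem eq_or_eq_of_outdeg_eq_two {v a b c : V} (hv : outdeg A v = 2) (ha : A v a) (hb : A v b)
    (hab : a ≠ b) (hc : A v c) : c = a ∨ c = b := by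
  obtain ⟨_, -, huniq⟩ := (Nat.card_eq_two_iff' (⟨a, ha⟩ : {u // A v u})).mp hv
  by_contra! hne
  have hcb := huniq ⟨c, hc⟩ fun h => hne.1 (congrArg Subtype.val h)
  have hbb := huniq ⟨b, hb⟩ fun h => hab (congrArg Subtype.val h).symm
  exact hne.2 (congrArg Subtype.val (hcb.trans hbb.symm))

theorem IsHybrid.not_isTreeNode {w : V} (hw : IsHybrid A w) : ¬ IsTreeNode A w := by
  obtain ⟨h1, h2⟩ := hw
  rintro (⟨g1, g2⟩ | ⟨g1, g2⟩ | ⟨g1, g2⟩) <;> omega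

theorem IsTreeNode.indeg_eq_one_of_arc [Finite V] {u v : V} (hv : IsTreeNode A v)
    (huv : A u v) : indeg A v = 1 := by
  have := indeg_pos_of_arc huv
  rcases hv with ⟨h1, -⟩ | ⟨h1, -⟩ | ⟨h1, -⟩ <;> omega

theorem IsTreeNode.eq_of_arc [Finite V] {v x y : V} (hv : IsTreeNode A v) (hx : A x v)
    (hy : A y v) : x = y :=
  eq_of_arc_of_indeg_eq_one (hv.indeg_eq_one_of_arc hx) hx hy

end Degrees

namespace BTC

variable {V : Type} [Finite V] (N : BTC V)

theorem isTreeNode_of_arc_of_isHybrid {w u : V} (hw : IsHybrid N.Arc w) (hwu : N.Arc w u) :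
    IsTreeNode N.Arc u := by
  obtain ⟨u', hwu', hu'⟩ := N.treeChild w (by rw [hw.2]; exact one_pos)
  rwa [eq_of_arc_of_outdeg_eq_one hw.2 hwu hwu']

theorem outdeg_eq_two_of_arc_of_isHybrid {x w : V} (hxw : N.Arc x w) (hw : IsHybrid N.Arc w) :
    outdeg N.Arc x = 2 := by
  have := outdeg_pos_of_arc hxw
  rcases N.binary x with (⟨-, h⟩ | ⟨-, h⟩ | ⟨-, h⟩) | hx
  · omega
  · exact h
  · exact h
  · exact absurd (N.isTreeNode_of_arc_of_isHybrid hx hxw) hw.not_isTreeNode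

-- Each node contributes `outdeg - indeg = 1 - 2 [leaf] - 2 [hybrid] + [root]`; sum and cancel.
theorem card_add_one :
    Nat.card V + 1 = 2 * Nat.card {v // IsLeaf N.Arc v} + 2 * Nat.card {v // IsHybrid N.Arc v} := by
  classical
  have := Fintype.ofFinite V
  have hroot : ∑ v, (if indeg N.Arc v = 0 then 1 else 0) = 1 := by
    rw [sum_boole, Nat.cast_id, ← Fintype.existsUnique_iff_card_one]
    exact N.uniqueRoot
  have hnode : ∀ v, outdeg N.Arc v + 2 * (if IsLeaf N.Arc v then 1 else 0) +
      2 * (if IsHybrid N.Arc v then 1 else 0) =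
      indeg N.Arc v + 1 + (if indeg N.Arc v = 0 then 1 else 0) := by
    intro v
    rcases N.binary v with (⟨h1, h2⟩ | ⟨h1, h2⟩ | ⟨h1, h2⟩) | ⟨h1, h2⟩ <;>
      simp [IsLeaf, IsHybrid, h1, h2]
  have hsum := congrArg (fun f : V → ℕ => ∑ v, f v) (funext hnode)
  simp only [sum_add_distrib, ← mul_sum, sum_indeg_eq_sum_outdeg, hroot, sum_const,
    card_univ, smul_eq_mul, mul_one] at hsum
  rw [Nat.card_eq_fintype_card, Nat.card_subtype_eq_sum_ite, Nat.card_subtype_eq_sum_ite]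
  omega

theorem card_isTreeNode_add_card_isHybrid :
    Nat.card {v // IsTreeNode N.Arc v} + Nat.card {v // IsHybrid N.Arc v} = Nat.card V := by
  classical
  have htree : ∀ v, IsTreeNode N.Arc v ↔ ¬ IsHybrid N.Arc v := fun v =>
    ⟨fun ht hh => hh.not_isTreeNode ht, (N.binary v).resolve_right⟩
  simp only [htree]
  rw [add_comm, ← Nat.card_sum]
  exact Nat.card_congr (Equiv.sumCompl _)

theorem card_hasHybridParent :
    Nat.card {u // IsTreeNode N.Arc u ∧ HasHybridParent N.Arc u} =
      Nat.card {w // IsHybrid N.Arc w} := by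
  refine Nat.card_eq_of_existsUnique (fun u w => N.Arc w.1 u.1) ?_ ?_
  · rintro ⟨u, hu, w, hw, hwu⟩
    exact ⟨⟨w, hw⟩, hwu, fun w' hw'u => Subtype.ext (hu.eq_of_arc hw'u hwu)⟩
  · rintro ⟨w, hw⟩
    obtain ⟨u, hwu, hu⟩ := N.treeChild w (by rw [hw.2]; exact one_pos)
    exact ⟨⟨u, hu, w, hw, hwu⟩, hwu,
      fun u' hwu' => Subtype.ext (eq_of_arc_of_outdeg_eq_one hw.2 hwu' hwu)⟩

theorem card_hasHybridSibling :
    Nat.card {u // IsTreeNode N.Arc u ∧ HasHybridSibling N.Arc u} =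
      2 * Nat.card {w // IsHybrid N.Arc w} := by
  classical
  have := Fintype.ofFinite V
  calc Nat.card {u // IsTreeNode N.Arc u ∧ HasHybridSibling N.Arc u}
      = Nat.card ((w : {w // IsHybrid N.Arc w}) × {x // N.Arc x w}) := by
        refine Nat.card_eq_of_existsUnique (fun u s => N.Arc s.2 u ∧ s.1.1 ≠ u) ?_ ?_
        · rintro ⟨u, hu, w, x, hw, hwu, hxu, hxw⟩
          refine ⟨⟨⟨w, hw⟩, ⟨x, hxw⟩⟩, ⟨hxu, hwu⟩, ?_⟩
          rintro ⟨⟨w', hw'⟩, ⟨x', hx'w'⟩⟩ ⟨hx'u, hw'u⟩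
          obtain rfl := hu.eq_of_arc hx'u hxu
          obtain rfl | rfl := eq_or_eq_of_outdeg_eq_two (N.outdeg_eq_two_of_arc_of_isHybrid hxw hw)
            hxw hxu hwu hx'w'
          · rfl
          · exact absurd rfl hw'u
        · rintro ⟨⟨w, hw⟩, ⟨x, hxw⟩⟩
          obtain ⟨u, hxu, hu⟩ := N.treeChild x (outdeg_pos_of_arc hxw)
          have hwu : w ≠ u := fun h => hw.not_isTreeNode (h ▸ hu)
          refine ⟨⟨u, hu, w, x, hw, hwu, hxu, hxw⟩, ⟨hxu, hwu⟩, ?_⟩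
          rintro u' ⟨hxu', hwu'⟩
          obtain h | h := eq_or_eq_of_outdeg_eq_two (N.outdeg_eq_two_of_arc_of_isHybrid hxw hw)
            hxw hxu hwu hxu'
          · exact absurd h.symm hwu'
          · exact Subtype.ext h
    _ = 2 * Nat.card {w // IsHybrid N.Arc w} := by
        rw [Nat.card_sigma, sum_congr rfl fun w _ => w.2.1, sum_const, card_univ,
          smul_eq_mul, Nat.card_eq_fintype_card, mul_comm]

theorem not_hasHybridSibling_of_hasHybridParent {u : V} (hu : IsTreeNode N.Arc u)
    (hp : HasHybridParent N.Arc u) : ¬ HasHybridSibling N.Arc u := by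
  obtain ⟨w, hw, hwu⟩ := hp
  rintro ⟨w', x, -, hw'u, hxu, hxw'⟩
  obtain rfl := hu.eq_of_arc hxu hwu
  exact hw'u (eq_of_arc_of_outdeg_eq_one hw.2 hxw' hwu)

end BTC

/-- In a binary tree-child network with n leaves and h hybrid nodes, the number
of tree nodes that have neither a hybrid parent nor a hybrid sibling equals
2n - 2h - 1. -/
theorem stmt9 {V : Type} [Finite V] (N : BTC V) (n h : ℕ)
    (hn : n = Nat.card {v : V // IsLeaf N.Arc v})
    (hh : h = Nat.card {v : V // IsHybrid N.Arc v}) :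
    (Nat.card {u : V // IsTreeNode N.Arc u ∧ ¬ HasHybridParent N.Arc u ∧
      ¬ HasHybridSibling N.Arc u} : ℤ) = 2 * (n : ℤ) - 2 * (h : ℤ) - 1 := by
  have hsplit := Nat.card_subtype_and_not_or_add (IsTreeNode N.Arc) (HasHybridParent N.Arc)
    (HasHybridSibling N.Arc) fun _ => N.not_hasHybridSibling_of_hasHybridParent
  rw [N.card_hasHybridParent, N.card_hasHybridSibling] at hsplit
  have htree := N.card_isTreeNode_add_card_isHybrid
  have hcard := N.card_add_one
  subst hn hh
  omega
end

section
/- Let N be a binary tree-child network with t tree nodes and h hybrid nodes, ℓ a leaf, and N' = R(N, ℓ) its reduction. If k is the number of nodes in the removed extended TH-path of ℓ, then N' has t - k - 1 tree nodes and h - k + 1 hybrid nodes. -/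
/-- The node set of the extended TH-path of ℓ (the TH-path p with first node
u1, together with the parent of u1 when that parent is hybrid). -/
def ExtDel {V : Type} (A : V → V → Prop) (u1 : V) (p : List V) : V → Prop :=
  fun v => v ∈ p ∨ (A v u1 ∧ IsHybrid A v)

/-- The arcs of the subgraph induced by deleting the nodes satisfying D. -/
def SubArc {V : Type} (A : V → V → Prop) (D : V → Prop) : V → V → Prop :=
  fun a b => A a b ∧ ¬ D a ∧ ¬ D b

/-- An elementary node after deletion: a surviving node of degrees (1,1) or
(0,1) in the induced subgraph. -/
def Elem {V : Type} (A : V → V → Prop) (D : V → Prop) (v : V) : Prop :=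
  ¬ D v ∧ outdeg (SubArc A D) v = 1 ∧ indeg (SubArc A D) v ≤ 1

/-- The nodes kept by the reduction: neither deleted nor elementary. -/
def Keep {V : Type} (A : V → V → Prop) (D : V → Prop) (v : V) : Prop :=
  ¬ D v ∧ ¬ Elem A D v

/-- The arcs of the reduced network: a → b when there is a path from a to b in
the induced subgraph all of whose intermediate nodes are elementary (i.e. all
elementary nodes are suppressed). -/
def RedArc {V : Type} (A : V → V → Prop) (D : V → Prop)
    (a b : {v : V // Keep A D v}) : Prop :=
  ∃ c : V, Relation.ReflTransGen (fun x y => SubArc A D x y ∧ Elem A D y) a.1 c ∧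
    SubArc A D c b.1

section CardHelpers

open Relation

variable {V : Type} [Finite V]

lemma ncard_subtype (P : V → Prop) : Nat.card {x // P x} = {x | P x}.ncard :=
  Nat.card_coe_set_eq {x | P x}

lemma card_zero_iff {P : V → Prop} : Nat.card {x // P x} = 0 ↔ ∀ x, ¬ P x := by
  rw [ncard_subtype, Set.ncard_eq_zero (Set.toFinite _), Set.eq_empty_iff_forall_notMem]
  exact Iff.rfl

lemma card_ne_zero_of {P : V → Prop} {x : V} (h : P x) : Nat.card {x // P x} ≠ 0 :=
  fun h0 => card_zero_iff.1 h0 x h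

lemma card_pos_exists {P : V → Prop} (h : Nat.card {x // P x} ≠ 0) : ∃ x, P x := by
  by_contra hc; push_neg at hc; exact h (card_zero_iff.2 hc)

lemma card_one_unique {P : V → Prop} (h : Nat.card {x // P x} = 1) :
    ∃ a, P a ∧ ∀ b, P b → b = a := by
  rw [ncard_subtype, Set.ncard_eq_one] at h
  obtain ⟨a, ha⟩ := h
  have hm := Set.ext_iff.1 ha
  exact ⟨a, (hm a).2 rfl, fun b hb => (hm b).1 hb⟩

lemma card_two_pair {P : V → Prop} (h : Nat.card {x // P x} = 2) :
    ∃ a b, a ≠ b ∧ P a ∧ P b ∧ ∀ y, P y → y = a ∨ y = b := by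
  rw [ncard_subtype, Set.ncard_eq_two] at h
  obtain ⟨a, b, hab, he⟩ := h
  have hm := Set.ext_iff.1 he
  exact ⟨a, b, hab, (hm a).2 (Or.inl rfl), (hm b).2 (Or.inr rfl), fun y hy => (hm y).1 hy⟩

lemma card_two_other {P : V → Prop} (h : Nat.card {x // P x} = 2) {c : V} (hc : P c) :
    ∃ d, d ≠ c ∧ P d ∧ ∀ y, P y → y = c ∨ y = d := by
  obtain ⟨a, b, hab, ha, hb, hall⟩ := card_two_pair h
  rcases hall c hc with rfl | rfl
  · exact ⟨b, hab.symm, hb, fun y hy => hall y hy⟩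
  · exact ⟨a, hab, ha, fun y hy => (hall y hy).symm⟩

lemma card_eq_one_of {P : V → Prop} {d : V} (hd : P d) (hu : ∀ y, P y → y = d) :
    Nat.card {x // P x} = 1 := by
  rw [ncard_subtype, Set.ncard_eq_one]
  exact ⟨d, Set.ext fun y => ⟨fun h => hu y h, fun h => h ▸ hd⟩⟩

lemma card_le_one_of {P : V → Prop} {d : V} (hu : ∀ y, P y → y = d) :
    Nat.card {x // P x} ≤ 1 := by
  rw [ncard_subtype]
  have h1 : {x | P x} ⊆ {d} := fun y hy => hu y hy
  have := Set.ncard_le_ncard h1 (Set.toFinite _)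
  simpa using this

lemma card_mono {P Q : V → Prop} (h : ∀ x, P x → Q x) :
    Nat.card {x // P x} ≤ Nat.card {x // Q x} := by
  rw [ncard_subtype, ncard_subtype]
  exact Set.ncard_le_ncard h (Set.toFinite _)

lemma two_le_card {P : V → Prop} {a b : V} (hab : a ≠ b) (ha : P a) (hb : P b) :
    2 ≤ Nat.card {x // P x} := by
  rw [ncard_subtype]
  have h1 : ({a, b} : Set V) ⊆ {x | P x} := by
    intro x hx
    rcases hx with rfl | rfl
    · exact ha
    · exact hb
  have := Set.ncard_le_ncard h1 (Set.toFinite _)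
  rwa [Set.ncard_pair hab] at this

lemma card_iff_congr {P Q : V → Prop} (h : ∀ x, P x ↔ Q x) :
    Nat.card {x // P x} = Nat.card {x // Q x} :=
  Nat.card_congr (Equiv.subtypeEquivRight h)

lemma card_split (Q : V → Prop) :
    Nat.card V = Nat.card {x // Q x} + Nat.card {x // ¬ Q x} := by
  classical
  rw [← Nat.card_congr (Equiv.sumCompl Q), Nat.card_sum]

lemma card_split_subtype (P Q : V → Prop) :
    Nat.card {x // P x} = Nat.card {x // P x ∧ Q x} + Nat.card {x // P x ∧ ¬ Q x} := by
  classical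
  rw [card_split (V := {x // P x}) (fun x => Q x.1)]
  congr 1
  · exact Nat.card_congr (Equiv.subtypeSubtypeEquivSubtypeInter P Q)
  · exact Nat.card_congr (Equiv.subtypeSubtypeEquivSubtypeInter P (fun x => ¬ Q x))

lemma tree_not_hybrid {A : V → V → Prop} {v : V} (ht : IsTreeNode A v) (hh : IsHybrid A v) :
    False := by
  obtain ⟨g1, g2⟩ := hh
  rcases ht with ⟨h1, h2⟩ | ⟨h1, h2⟩ | ⟨h1, h2⟩ <;> omega

lemma leaf_iff_outdeg {A : V → V → Prop} {v : V}
    (hb : IsTreeNode A v ∨ IsHybrid A v) : IsLeaf A v ↔ outdeg A v = 0 := by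
  constructor
  · exact fun h => h.2
  · intro h0
    rcases hb with (⟨h1, h2⟩ | ⟨h1, h2⟩ | ⟨h1, h2⟩) | ⟨h1, h2⟩
    · exact ⟨h1, h0⟩
    · omega
    · omega
    · omega

lemma wf_transGen {A : V → V → Prop} (hac : ∀ v, ¬ Relation.TransGen A v v) :
    WellFounded (Relation.TransGen A) := by
  haveI : IsTrans V (Relation.TransGen A) := ⟨fun _ _ _ => Relation.TransGen.trans⟩
  haveI : IsIrrefl V (Relation.TransGen A) := ⟨hac⟩
  exact Finite.wellFounded_of_trans_of_irrefl _

lemma wf_transGen_swap {A : V → V → Prop} (hac : ∀ v, ¬ Relation.TransGen A v v) :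
    WellFounded (fun x y : V => Relation.TransGen A y x) := by
  haveI : IsTrans V (fun x y : V => Relation.TransGen A y x) :=
    ⟨fun _ _ _ h1 h2 => Relation.TransGen.trans h2 h1⟩
  haveI : IsIrrefl V (fun x y : V => Relation.TransGen A y x) := ⟨hac⟩
  exact Finite.wellFounded_of_trans_of_irrefl _

end CardHelpers

section DegreeHelpers

variable {V : Type} [Finite V] {A : V → V → Prop}

lemma outdeg_zero_iff {v : V} : outdeg A v = 0 ↔ ∀ y, ¬ A v y := card_zero_iff

lemma indeg_zero_iff {v : V} : indeg A v = 0 ↔ ∀ y, ¬ A y v := card_zero_iff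

lemma outdeg_ne_zero_of {v y : V} (h : A v y) : outdeg A v ≠ 0 := card_ne_zero_of h

lemma indeg_ne_zero_of {v y : V} (h : A y v) : indeg A v ≠ 0 := card_ne_zero_of h

lemma exists_child_of_ne_zero {v : V} (h : outdeg A v ≠ 0) : ∃ y, A v y := card_pos_exists h

lemma exists_parent_of_ne_zero {v : V} (h : indeg A v ≠ 0) : ∃ y, A y v := card_pos_exists h

lemma outdeg_one_unique {v : V} (h : outdeg A v = 1) : ∃ d, A v d ∧ ∀ y, A v y → y = d :=
  card_one_unique h

lemma indeg_one_unique {v : V} (h : indeg A v = 1) : ∃ d, A d v ∧ ∀ y, A y v → y = d :=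
  card_one_unique h

lemma outdeg_two_pair {v : V} (h : outdeg A v = 2) :
    ∃ a b, a ≠ b ∧ A v a ∧ A v b ∧ ∀ y, A v y → y = a ∨ y = b := card_two_pair h

lemma indeg_two_pair {v : V} (h : indeg A v = 2) :
    ∃ a b, a ≠ b ∧ A a v ∧ A b v ∧ ∀ y, A y v → y = a ∨ y = b := card_two_pair h

lemma outdeg_two_other {v c : V} (h : outdeg A v = 2) (hc : A v c) :
    ∃ d, d ≠ c ∧ A v d ∧ ∀ y, A v y → y = c ∨ y = d := card_two_other h hc

lemma indeg_two_other {v c : V} (h : indeg A v = 2) (hc : A c v) :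
    ∃ d, d ≠ c ∧ A d v ∧ ∀ y, A y v → y = c ∨ y = d := card_two_other h hc

lemma outdeg_eq_one_of {v d : V} (hd : A v d) (hu : ∀ y, A v y → y = d) : outdeg A v = 1 :=
  card_eq_one_of hd hu

lemma indeg_le_one_of {v d : V} (hu : ∀ y, A y v → y = d) : indeg A v ≤ 1 := card_le_one_of hu

lemma two_le_outdeg {v a b : V} (hab : a ≠ b) (ha : A v a) (hb : A v b) : 2 ≤ outdeg A v :=
  two_le_card hab ha hb

lemma two_le_indeg {v a b : V} (hab : a ≠ b) (ha : A a v) (hb : A b v) : 2 ≤ indeg A v :=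
  two_le_card hab ha hb

lemma sub_outdeg_le (A : V → V → Prop) (D : V → Prop) (v : V) :
    outdeg (SubArc A D) v ≤ outdeg A v := card_mono (fun _ hy => hy.1)

lemma sub_indeg_le (A : V → V → Prop) (D : V → Prop) (v : V) :
    indeg (SubArc A D) v ≤ indeg A v := card_mono (fun _ hy => hy.1)

end DegreeHelpers

section Handshake

lemma btc_handshake {V : Type} [Finite V] (N : BTC V) :
    (Nat.card {v : V // IsTreeNode N.Arc v} : ℤ)
      = 2 * (Nat.card {v : V // IsLeaf N.Arc v} : ℤ)
        + (Nat.card {v : V // IsHybrid N.Arc v} : ℤ) - 1 := by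
  classical
  cases nonempty_fintype V
  set A := N.Arc with hA
  -- the number of arcs, counted two ways
  have hsum : ∑ v : V, indeg A v = ∑ v : V, outdeg A v := by
    have h1 : Nat.card {x : V × V // A x.1 x.2} = ∑ v : V, outdeg A v := by
      rw [Nat.card_congr (Equiv.subtypeProdEquivSigmaSubtype fun a b => A a b),
        Nat.card_eq_fintype_card, Fintype.card_sigma]
      unfold outdeg
      simp [Nat.card_eq_fintype_card]
    have h2 : Nat.card {x : V × V // A x.1 x.2} = ∑ v : V, indeg A v := by
      have e : {x : V × V // A x.1 x.2} ≃ {x : V × V // A x.2 x.1} :=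
        { toFun := fun x => ⟨(x.1.2, x.1.1), x.2⟩
          invFun := fun x => ⟨(x.1.2, x.1.1), x.2⟩
          left_inv := fun x => rfl
          right_inv := fun x => rfl }
      rw [Nat.card_congr e,
        Nat.card_congr (Equiv.subtypeProdEquivSigmaSubtype fun a b => A b a),
        Nat.card_eq_fintype_card, Fintype.card_sigma]
      unfold indeg
      simp [Nat.card_eq_fintype_card]
    omega
  obtain ⟨rt, hrt0, hrtu⟩ := N.uniqueRoot
  set T : Finset V := Finset.univ.filter (fun v => IsTreeNode A v) with hT
  set H : Finset V := Finset.univ.filter (fun v => IsHybrid A v) with hH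
  set Lf : Finset V := Finset.univ.filter (fun v => IsLeaf A v) with hLf
  have hnh : ∀ v : V, (¬ IsTreeNode A v) ↔ IsHybrid A v := fun v =>
    ⟨fun hn => (N.binary v).resolve_left hn, fun hh ht => tree_not_hybrid ht hh⟩
  have hfilter : Finset.univ.filter (fun v => ¬ IsTreeNode A v) = H := by
    apply Finset.filter_congr
    intro v _
    simp [hnh v]
  -- in-degrees
  have hrtT : rt ∈ T := by
    rw [hT, Finset.mem_filter]
    refine ⟨Finset.mem_univ _, ?_⟩
    rcases N.binary rt with h | h
    · exact h
    · exfalso; have := h.1; omega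
  have hTin : ∑ v ∈ T, indeg A v + 1 = T.card := by
    rw [Finset.sum_eq_sum_sdiff_singleton_add hrtT (fun v => indeg A v)]
    have hone : ∀ v ∈ T \ {rt}, indeg A v = 1 := by
      intro v hv
      rw [Finset.mem_sdiff, Finset.mem_singleton] at hv
      obtain ⟨hvT, hvrt⟩ := hv
      rw [hT, Finset.mem_filter] at hvT
      have hv0 : indeg A v ≠ 0 := fun h0 => hvrt (hrtu v h0)
      rcases hvT.2 with ⟨h1, _⟩ | ⟨h1, _⟩ | ⟨h1, _⟩ <;> omega
    rw [Finset.sum_congr rfl hone, Finset.sum_const, smul_eq_mul, mul_one, hrt0,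
      Finset.card_sdiff_of_subset (Finset.singleton_subset_iff.2 hrtT), Finset.card_singleton]
    have : 1 ≤ T.card := Finset.card_pos.2 ⟨rt, hrtT⟩
    omega
  have hHin : ∑ v ∈ H, indeg A v = 2 * H.card := by
    have : ∀ v ∈ H, indeg A v = 2 := by
      intro v hv
      rw [hH, Finset.mem_filter] at hv
      exact hv.2.1
    rw [Finset.sum_congr rfl this, Finset.sum_const, smul_eq_mul, mul_comm]
  -- out-degrees
  have hTLf : T.filter (fun v => IsLeaf A v) = Lf := by
    rw [hT, hLf, Finset.filter_filter]
    apply Finset.filter_congr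
    intro v _
    constructor
    · exact fun h => h.2
    · exact fun h => ⟨Or.inl h, h⟩
  have hTout : ∑ v ∈ T, outdeg A v + 2 * Lf.card = 2 * T.card := by
    rw [← Finset.sum_filter_add_sum_filter_not T (fun v => IsLeaf A v) (fun v => outdeg A v)]
    have hz : ∀ v ∈ T.filter (fun v => IsLeaf A v), outdeg A v = 0 := by
      intro v hv
      rw [Finset.mem_filter] at hv
      exact hv.2.2
    have h2 : ∀ v ∈ T.filter (fun v => ¬ IsLeaf A v), outdeg A v = 2 := by
      intro v hv
      rw [Finset.mem_filter, hT, Finset.mem_filter] at hv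
      obtain ⟨⟨_, hvT⟩, hvL⟩ := hv
      rcases hvT with h | ⟨_, h⟩ | ⟨_, h⟩
      · exact absurd h hvL
      · exact h
      · exact h
    rw [Finset.sum_congr rfl hz, Finset.sum_congr rfl h2, Finset.sum_const, Finset.sum_const,
      smul_eq_mul, smul_eq_mul, mul_zero]
    have hcards := Finset.card_filter_add_card_filter_not
      (s := T) (fun v => IsLeaf A v)
    rw [hTLf] at hcards
    omega
  have hHout : ∑ v ∈ H, outdeg A v = H.card := by
    have : ∀ v ∈ H, outdeg A v = 1 := by
      intro v hv
      rw [hH, Finset.mem_filter] at hv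
      exact hv.2.2
    rw [Finset.sum_congr rfl this, Finset.sum_const, smul_eq_mul, mul_one]
  -- combine
  have hin : ∑ v ∈ T, indeg A v + ∑ v ∈ H, indeg A v = ∑ v : V, indeg A v := by
    rw [← Finset.sum_filter_add_sum_filter_not Finset.univ (fun v => IsTreeNode A v)
      (fun v => indeg A v), hfilter]
  have hout : ∑ v ∈ T, outdeg A v + ∑ v ∈ H, outdeg A v = ∑ v : V, outdeg A v := by
    rw [← Finset.sum_filter_add_sum_filter_not Finset.univ (fun v => IsTreeNode A v)
      (fun v => outdeg A v), hfilter]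
  have hct : Nat.card {v : V // IsTreeNode A v} = T.card := by
    rw [Nat.card_eq_fintype_card, Fintype.card_subtype]
  have hch : Nat.card {v : V // IsHybrid A v} = H.card := by
    rw [Nat.card_eq_fintype_card, Fintype.card_subtype]
  have hcl : Nat.card {v : V // IsLeaf A v} = Lf.card := by
    rw [Nat.card_eq_fintype_card, Fintype.card_subtype]
  rw [hct, hch, hcl]
  omega

end Handshake

section MainCount

open Relation

lemma main_count {V : Type} [Finite V] (N : BTC V) (D : V → Prop) (ℓ : V)
    (hℓ : IsLeaf N.Arc ℓ) (hℓD : D ℓ)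
    (N' : BTC {v : V // Keep N.Arc D v})
    (hN' : ∀ a b, N'.Arc a b ↔ RedArc N.Arc D a b)
    (hleaf : ∀ v, IsLeaf N.Arc v → ¬ Keep N.Arc D v → v = ℓ)
    (hNKD : ∀ x y, Keep N.Arc D x → N.Arc x y → ¬ D y)
    (hek : Nat.card {v : V // Elem N.Arc D v} = Nat.card {v : V // D v}) :
    (Nat.card {v : {v : V // Keep N.Arc D v} // IsTreeNode N'.Arc v} : ℤ)
        = (Nat.card {v : V // IsTreeNode N.Arc v} : ℤ)
          - (Nat.card {v : V // D v} : ℤ) - 1 ∧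
    (Nat.card {v : {v : V // Keep N.Arc D v} // IsHybrid N'.Arc v} : ℤ)
        = (Nat.card {v : V // IsHybrid N.Arc v} : ℤ)
          - (Nat.card {v : V // D v} : ℤ) + 1 := by
  classical
  have hb := btc_handshake N
  have hb' := btc_handshake N'
  -- V = tree + hybrid
  have hV1 : Nat.card V = Nat.card {v : V // IsTreeNode N.Arc v}
      + Nat.card {v : V // IsHybrid N.Arc v} := by
    rw [card_split (fun v => IsTreeNode N.Arc v)]
    congr 1
    exact card_iff_congr fun v =>
      ⟨fun hn => (N.binary v).resolve_left hn, fun hh ht => tree_not_hybrid ht hh⟩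
  -- V = D + Elem + Keep
  have hV2 : Nat.card V = Nat.card {v : V // D v} + Nat.card {v : V // Elem N.Arc D v}
      + Nat.card {v : V // Keep N.Arc D v} := by
    rw [card_split (fun v => D v)]
    have h2 : Nat.card {v : V // ¬ D v}
        = Nat.card {v : V // Elem N.Arc D v} + Nat.card {v : V // Keep N.Arc D v} := by
      have e1 : Nat.card {v : V // ¬ D v ∧ Elem N.Arc D v}
          = Nat.card {v : V // Elem N.Arc D v} :=
        card_iff_congr fun v => ⟨fun h => h.2, fun h => ⟨h.1, h⟩⟩
      have e2 : Nat.card {v : V // ¬ D v ∧ ¬ Elem N.Arc D v}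
          = Nat.card {v : V // Keep N.Arc D v} :=
        card_iff_congr fun v => Iff.rfl
      rw [card_split_subtype (fun v => ¬ D v) (fun v => Elem N.Arc D v), e1, e2]
    omega
  -- Keep = tree' + hybrid'
  have hV3 : Nat.card {v : V // Keep N.Arc D v}
      = Nat.card {v : {v : V // Keep N.Arc D v} // IsTreeNode N'.Arc v}
        + Nat.card {v : {v : V // Keep N.Arc D v} // IsHybrid N'.Arc v} := by
    rw [card_split (fun v => IsTreeNode N'.Arc v)]
    congr 1
    exact card_iff_congr fun v =>
      ⟨fun hn => (N'.binary v).resolve_left hn, fun hh ht => tree_not_hybrid ht hh⟩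
  -- leaves of N' are exactly the kept leaves of N
  have hwfs := wf_transGen_swap N.acyclic
  have hQ : ∀ c, Elem N.Arc D c → ∃ m b, Keep N.Arc D b ∧
      Relation.ReflTransGen (fun x y => SubArc N.Arc D x y ∧ Elem N.Arc D y) c m ∧
      SubArc N.Arc D m b := by
    intro c
    induction c using WellFounded.induction hwfs with
    | _ c IH =>
      intro hcE
      obtain ⟨d, hd, _⟩ := outdeg_one_unique hcE.2.1
      by_cases hdE : Elem N.Arc D d
      · obtain ⟨m, b, hb, hchain, hlast⟩ := IH d (Relation.TransGen.single hd.1) hdE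
        exact ⟨m, b, hb, Relation.ReflTransGen.head ⟨hd, hdE⟩ hchain, hlast⟩
      · exact ⟨c, d, ⟨hd.2.2, hdE⟩, Relation.ReflTransGen.refl, hd⟩
  have houtiff : ∀ v : {v : V // Keep N.Arc D v},
      (outdeg N'.Arc v = 0 ↔ outdeg N.Arc v.1 = 0) := by
    intro v
    constructor
    · intro h0
      by_contra hne
      obtain ⟨y, hy⟩ := exists_child_of_ne_zero hne
      have hyD : ¬ D y := hNKD v.1 y v.2 hy
      have hsub : SubArc N.Arc D v.1 y := ⟨hy, v.2.1, hyD⟩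
      have : ∃ b : {v : V // Keep N.Arc D v}, N'.Arc v b := by
        by_cases hyE : Elem N.Arc D y
        · obtain ⟨m, b, hb, hchain, hlast⟩ := hQ y hyE
          exact ⟨⟨b, hb⟩, (hN' v ⟨b, hb⟩).2
            ⟨m, Relation.ReflTransGen.head ⟨hsub, hyE⟩ hchain, hlast⟩⟩
        · exact ⟨⟨y, hyD, hyE⟩, (hN' v ⟨y, hyD, hyE⟩).2
            ⟨v.1, Relation.ReflTransGen.refl, hsub⟩⟩
      obtain ⟨b, hbarc⟩ := this
      exact outdeg_ne_zero_of hbarc h0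
    · intro h0
      have h0' := outdeg_zero_iff.1 h0
      apply outdeg_zero_iff.2
      intro b hb
      obtain ⟨c, hchain, hsub⟩ := (hN' v b).1 hb
      rcases Relation.ReflTransGen.cases_head hchain with heq | ⟨x, hx, _⟩
      · rw [← heq] at hsub
        exact h0' b.1 hsub.1
      · exact h0' x hx.1.1
  have hleafiff : ∀ v : {v : V // Keep N.Arc D v},
      (IsLeaf N'.Arc v ↔ IsLeaf N.Arc v.1) := by
    intro v
    rw [leaf_iff_outdeg (N'.binary v), leaf_iff_outdeg (N.binary v.1)]
    exact houtiff v
  -- count leaves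
  have hL : Nat.card {v : V // IsLeaf N.Arc v}
      = Nat.card {v : {v : V // Keep N.Arc D v} // IsLeaf N'.Arc v} + 1 := by
    rw [card_split_subtype (fun v => IsLeaf N.Arc v) (fun v => Keep N.Arc D v)]
    congr 1
    · calc Nat.card {v : V // IsLeaf N.Arc v ∧ Keep N.Arc D v}
          = Nat.card {v : V // Keep N.Arc D v ∧ IsLeaf N.Arc v} :=
            card_iff_congr fun v => and_comm
        _ = Nat.card {x : {v : V // Keep N.Arc D v} // IsLeaf N.Arc x.1} :=
            (Nat.card_congr (Equiv.subtypeSubtypeEquivSubtypeInter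
              (fun v : V => Keep N.Arc D v) (fun v => IsLeaf N.Arc v))).symm
        _ = Nat.card {x : {v : V // Keep N.Arc D v} // IsLeaf N'.Arc x} :=
            card_iff_congr fun x => (hleafiff x).symm
    · have : ∀ v : V, (IsLeaf N.Arc v ∧ ¬ Keep N.Arc D v) ↔ v = ℓ := by
        intro v
        constructor
        · exact fun h => hleaf v h.1 h.2
        · rintro rfl
          exact ⟨hℓ, fun hk => hk.1 hℓD⟩
      rw [card_iff_congr this, Nat.card_eq_fintype_card, Fintype.card_subtype_eq]
  -- final arithmetic
  omega

end MainCount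

lemma getElem_idx_congr {α : Type} (l : List α) {i j : ℕ} (h : i = j) (hi : i < l.length) :
    l[i]'hi = l[j]'(h ▸ hi) := by subst h; rfl

/-- If N has t tree nodes and h hybrid nodes, ℓ is a leaf, and k is the number
of nodes of the removed extended TH-path of ℓ, then the reduction N' = R(N, ℓ)
has t - k - 1 tree nodes and h - k + 1 hybrid nodes. -/
theorem stmt16 {V : Type} [Finite V] (N : BTC V) (ℓ u1 : V) (p : List V)
    (hℓ : IsLeaf N.Arc ℓ) (hp : IsTHPath N.Arc ℓ p) (hu1 : p.head? = some u1)
    (t h k : ℕ)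
    (ht : t = Nat.card {v : V // IsTreeNode N.Arc v})
    (hh : h = Nat.card {v : V // IsHybrid N.Arc v})
    (hk : k = Nat.card {v : V // ExtDel N.Arc u1 p v})
    (N' : BTC {v : V // Keep N.Arc (ExtDel N.Arc u1 p) v})
    (hN' : ∀ a b, N'.Arc a b ↔ RedArc N.Arc (ExtDel N.Arc u1 p) a b) :
    (Nat.card {v : {v : V // Keep N.Arc (ExtDel N.Arc u1 p) v} //
        IsTreeNode N'.Arc v} : ℤ) = (t : ℤ) - (k : ℤ) - 1 ∧
    (Nat.card {v : {v : V // Keep N.Arc (ExtDel N.Arc u1 p) v} //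
        IsHybrid N'.Arc v} : ℤ) = (h : ℤ) - (k : ℤ) + 1 := by
  classical
  obtain ⟨⟨hne, hlast, hchain, htree, hhyb, hdist⟩, -⟩ := hp
  subst ht hh hk
  have hDdef : ∀ x, (ExtDel N.Arc u1 p) x ↔ (x ∈ p ∨ (N.Arc x u1 ∧ IsHybrid N.Arc x)) := fun x => Iff.rfl
  have hr : 0 < p.length := List.length_pos_iff.2 hne
  -- basic path facts
  have hu0 : p[0]'hr = u1 := by
    have h1 := List.head?_eq_head hne
    rw [h1] at hu1
    have h2 := Option.some.inj hu1
    rw [← h2, List.head_eq_getElem]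
  have hlastE : p[p.length - 1]'(by omega) = ℓ := by
    have h1 := List.getLast?_eq_getLast hne
    rw [h1] at hlast
    have h2 := Option.some.inj hlast
    rw [← h2, List.getLast_eq_getElem]
  have harc : ∀ i (hi : i + 1 < p.length), N.Arc (p[i]'(by omega)) (p[i+1]'hi) := by
    intro i hi
    have h1 := List.isChain_iff_getElem.1 hchain i (by omega)
    simpa [List.get_eq_getElem] using h1
  have htrans : ∀ j (hj : j < p.length) i (hij : i < j),
      Relation.TransGen N.Arc (p[i]'(by omega)) (p[j]'hj) := by
    intro j
    induction j with
    | zero => intro _ i hij; omega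
    | succ n ih =>
      intro hj i hij
      rcases Nat.lt_succ_iff_lt_or_eq.1 hij with hlt | heq
      · exact (ih (by omega) i hlt).tail (harc n hj)
      · subst heq
        exact Relation.TransGen.single (harc i hj)
  have hnodup : ∀ i j (hi : i < p.length) (hj : j < p.length),
      p[i]'hi = p[j]'hj → i = j := by
    intro i j hi hj he
    by_contra hne'
    rcases Nat.lt_or_ge i j with hlt | hge
    · have t1 := htrans j hj i hlt
      rw [he] at t1
      exact N.acyclic _ t1
    · have hlt : j < i := by omega
      have t1 := htrans i hi j hlt
      rw [← he] at t1
      exact N.acyclic _ t1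
  have hmemp : ∀ x, x ∈ p ↔ ∃ i, ∃ hi : i < p.length, p[i]'hi = x := fun x =>
    List.mem_iff_getElem
  have htreeI : ∀ i (hi : i < p.length), IsTreeNode N.Arc (p[i]'hi) :=
    fun i hi => htree _ (List.getElem_mem hi)
  have hℓnochild : ∀ y, ¬ N.Arc ℓ y := outdeg_zero_iff.1 hℓ.2
  have hout2 : ∀ i (hi : i + 1 < p.length), outdeg N.Arc (p[i]'(by omega)) = 2 := by
    intro i hi
    rcases htreeI i (by omega) with ⟨_, h0⟩ | ⟨_, h2⟩ | ⟨_, h2⟩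
    · exact absurd h0 (outdeg_ne_zero_of (harc i hi))
    · exact h2
    · exact h2
  have harc' : ∀ i (hi0 : 0 < i) (hi : i < p.length), N.Arc (p[i-1]'(by omega)) (p[i]'hi) := by
    intro i hi0 hi
    have h1 := harc (i-1) (by omega)
    have e : i - 1 + 1 = i := by omega
    simp only [e] at h1
    exact h1
  have hparent : ∀ i (hi0 : 0 < i) (hi : i < p.length) x,
      N.Arc x (p[i]'hi) → x = p[i-1]'(by omega) := by
    intro i hi0 hi x hx
    have h1 : indeg N.Arc (p[i]'hi) = 1 := by
      rcases htreeI i hi with ⟨h2, _⟩ | ⟨h2, _⟩ | ⟨h2, _⟩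
      · exact h2
      · exact absurd h2 (indeg_ne_zero_of (harc' i hi0 hi))
      · exact h2
    obtain ⟨d, hd, hdu⟩ := indeg_one_unique h1
    rw [hdu x hx, ← hdu _ (harc' i hi0 hi)]
  -- the hybrid children along the path
  have hvspec : ∀ i (hi : i + 1 < p.length),
      ∃ v, N.Arc (p[i]'(by omega)) v ∧ v ≠ p[i+1]'hi ∧
        ∀ y, N.Arc (p[i]'(by omega)) y → y = p[i+1]'hi ∨ y = v := by
    intro i hi
    obtain ⟨d, hd1, hd2, hd3⟩ := outdeg_two_other (hout2 i hi) (harc i hi)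
    exact ⟨d, hd2, hd1, hd3⟩
  obtain ⟨vf, hvf⟩ : ∃ f : ℕ → V, ∀ i (hi : i + 1 < p.length),
      N.Arc (p[i]'(by omega)) (f i) ∧ f i ≠ p[i+1]'hi ∧
        ∀ y, N.Arc (p[i]'(by omega)) y → y = p[i+1]'hi ∨ y = f i := by
    refine ⟨fun i => if hi : i + 1 < p.length then (hvspec i hi).choose else ℓ, ?_⟩
    intro i hi
    simp only [dif_pos hi]
    exact (hvspec i hi).choose_spec
  have hvarc : ∀ i (hi : i + 1 < p.length), N.Arc (p[i]'(by omega)) (vf i) :=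
    fun i hi => (hvf i hi).1
  have hvne : ∀ i (hi : i + 1 < p.length), vf i ≠ p[i+1]'hi := fun i hi => (hvf i hi).2.1
  have hvall : ∀ i (hi : i + 1 < p.length) y,
      N.Arc (p[i]'(by omega)) y → y = p[i+1]'hi ∨ y = vf i := fun i hi => (hvf i hi).2.2
  have hvhyb : ∀ i (hi : i + 1 < p.length), IsHybrid N.Arc (vf i) :=
    fun i hi => hhyb i hi _ (hvarc i hi) (hvne i hi)
  have hvnotp : ∀ i (hi : i + 1 < p.length), vf i ∉ p := by
    intro i hi hm
    exact tree_not_hybrid (htree _ hm) (hvhyb i hi)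
  have hvinj : ∀ i j (hi : i + 1 < p.length) (hj : j + 1 < p.length),
      i ≠ j → vf i ≠ vf j :=
    fun i j hi hj hij =>
      hdist i j hi hj hij _ _ (hvarc i hi) (hvne i hi) (hvarc j hj) (hvne j hj)
  have hvpar2 : ∀ i (hi : i + 1 < p.length),
      ∃ z, z ≠ p[i]'(by omega) ∧ N.Arc z (vf i) ∧ z ∉ p ∧
        ∀ x, N.Arc x (vf i) → x = p[i]'(by omega) ∨ x = z := by
    intro i hi
    obtain ⟨z, hz1, hz2, hz3⟩ := indeg_two_other (hvhyb i hi).1 (hvarc i hi)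
    refine ⟨z, hz1, hz2, ?_, hz3⟩
    intro hzp
    obtain ⟨j, hj, hje⟩ := (hmemp z).1 hzp
    rcases Nat.lt_or_ge (j+1) p.length with hj1 | hj1
    · rcases eq_or_ne i j with rfl | hij
      · exact hz1 hje.symm
      · have hzarc : N.Arc (p[j]'(by omega)) (vf i) := by rw [hje]; exact hz2
        have hvnej : vf i ≠ p[j+1]'hj1 := by
          intro he
          have ht' := htreeI (j+1) hj1
          rw [← he] at ht'
          exact tree_not_hybrid ht' (hvhyb i hi)
        exact hdist i j hi hj1 hij _ _ (hvarc i hi) (hvne i hi) hzarc hvnej rfl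
    · have hjl : j = p.length - 1 := by omega
      subst hjl
      rw [hlastE] at hje
      rw [← hje] at hz2
      exact hℓnochild _ hz2
  -- u1 has in-degree 1 (it is not the root)
  have hu1tree : IsTreeNode N.Arc u1 := by rw [← hu0]; exact htreeI 0 hr
  have hu1in : indeg N.Arc u1 = 1 := by
    rcases hu1tree with ⟨h1, _⟩ | ⟨h0, _⟩ | ⟨h1, _⟩
    · exact h1
    · exfalso
      have hr2 : 2 ≤ p.length := by
        by_contra hlt
        have hpl : p.length = 1 := by omega
        have e1 : p[p.length - 1]'(by omega) = p[0]'hr :=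
          getElem_idx_congr p (by omega) (by omega)
        have e2 : u1 = ℓ := by rw [← hu0, ← hlastE, e1]
        rw [e2] at h0
        rw [hℓ.1] at h0
        omega
      have hnopar : ∀ x, ¬ N.Arc x u1 := indeg_zero_iff.1 h0
      have hstep : ∀ x, x ∉ p → ∃ y, y ∉ p ∧ N.Arc y x := by
        intro x hxp
        have hx0 : indeg N.Arc x ≠ 0 := by
          intro h0'
          obtain ⟨rt, hrt, hrtu⟩ := N.uniqueRoot
          have e1 : x = rt := hrtu x h0'
          have e2 : u1 = rt := hrtu u1 h0
          rw [e1, ← e2] at hxp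
          exact hxp (by rw [← hu0]; exact List.getElem_mem hr)
        obtain ⟨y, hy⟩ := exists_parent_of_ne_zero hx0
        by_cases hyp : y ∈ p
        · obtain ⟨j, hj, hje⟩ := (hmemp y).1 hyp
          rw [← hje] at hy
          have hj1 : j + 1 < p.length := by
            rcases Nat.lt_or_ge (j+1) p.length with h2 | h2
            · exact h2
            · exfalso
              have hjl : j = p.length - 1 := by omega
              subst hjl
              rw [hlastE] at hy
              exact hℓnochild x hy
          rcases hvall j hj1 x hy with h1 | h2
          · exact absurd (by rw [h1]; exact List.getElem_mem hj1) hxp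
          · obtain ⟨z, hz1, hz2, hz3, _⟩ := hvpar2 j hj1
            refine ⟨z, hz3, ?_⟩
            rw [h2]
            exact hz2
        · exact ⟨y, hyp, hy⟩
      have hwf := wf_transGen N.acyclic
      have hSne : Set.Nonempty {x : V | x ∉ p} := ⟨vf 0, hvnotp 0 (by omega)⟩
      obtain ⟨m, hm, hmin⟩ := hwf.has_min {x | x ∉ p} hSne
      obtain ⟨y, hy1, hy2⟩ := hstep m hm
      exact hmin y hy1 (Relation.TransGen.single hy2)
    · exact h1
  -- the unique parent q of u1
  obtain ⟨q, hq, hqu⟩ := indeg_one_unique hu1in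
  have hqnotp : q ∉ p := by
    intro hqp
    obtain ⟨j, hj, hje⟩ := (hmemp q).1 hqp
    rcases Nat.eq_zero_or_pos j with rfl | hpos
    · apply N.acyclic u1
      refine Relation.TransGen.single ?_
      have e : q = u1 := by rw [← hje, hu0]
      rw [e] at hq
      exact hq
    · apply N.acyclic q
      have t1 := htrans j hj 0 hpos
      rw [hu0, hje] at t1
      exact (Relation.TransGen.single hq).trans t1
  have hDiff : ∀ x, (ExtDel N.Arc u1 p) x ↔ (x ∈ p ∨ (x = q ∧ IsHybrid N.Arc q)) := by
    intro x
    rw [hDdef x]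
    constructor
    · rintro (h1 | ⟨hxu, hxh⟩)
      · exact Or.inl h1
      · have e := hqu x hxu
        refine Or.inr ⟨e, ?_⟩
        rw [← e]
        exact hxh
    · rintro (h1 | ⟨rfl, hh2⟩)
      · exact Or.inl h1
      · exact Or.inr ⟨hq, hh2⟩
  have hpD : ∀ i (hi : i < p.length), (ExtDel N.Arc u1 p) (p[i]'hi) :=
    fun i hi => (hDdef _).2 (Or.inl (List.getElem_mem hi))
  have hu1D : (ExtDel N.Arc u1 p) u1 :=
    (hDdef u1).2 (Or.inl (by rw [← hu0]; exact List.getElem_mem hr))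
  have hℓD : (ExtDel N.Arc u1 p) ℓ :=
    (hDdef ℓ).2 (Or.inl (by rw [← hlastE]; exact List.getElem_mem (by omega)))
  have hvq : ∀ i (hi : i + 1 < p.length), vf i ≠ q := by
    intro i hi he
    apply N.acyclic u1
    have harcq : N.Arc (vf i) u1 := by rw [he]; exact hq
    rcases Nat.eq_zero_or_pos i with rfl | hpos
    · have a1 : N.Arc u1 (vf 0) := by rw [← hu0]; exact hvarc 0 hi
      exact (Relation.TransGen.single a1).tail harcq
    · have t1 := htrans i (by omega) 0 hpos
      rw [hu0] at t1
      exact (t1.tail (hvarc i hi)).tail harcq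
  have hvnotD : ∀ i (hi : i + 1 < p.length), ¬ (ExtDel N.Arc u1 p) (vf i) := by
    intro i hi hDv
    rcases (hDiff _).1 hDv with hmem | ⟨he, _⟩
    · exact hvnotp i hi hmem
    · exact hvq i hi he
  have hvchild : ∀ i (hi : i + 1 < p.length),
      ∃ d, N.Arc (vf i) d ∧ (∀ y, N.Arc (vf i) y → y = d) ∧ d ∉ p := by
    intro i hi
    obtain ⟨d, hd, hdu⟩ := outdeg_one_unique (hvhyb i hi).2
    refine ⟨d, hd, hdu, ?_⟩
    intro hdp
    obtain ⟨j, hj, hje⟩ := (hmemp d).1 hdp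
    rcases Nat.eq_zero_or_pos j with rfl | hpos
    · have harcd : N.Arc (vf i) u1 := by rw [← hu0, hje]; exact hd
      exact hvq i hi (hqu (vf i) harcd)
    · have hpar := hparent j hpos hj (vf i) (by rw [hje]; exact hd)
      exact hvnotp i hi (by rw [hpar]; exact List.getElem_mem (by omega))
  have hvsubin : ∀ i (hi : i + 1 < p.length), indeg (SubArc N.Arc (ExtDel N.Arc u1 p)) (vf i) ≤ 1 := by
    intro i hi
    obtain ⟨z, hz1, hz2, hz3, hzall⟩ := hvpar2 i hi
    apply indeg_le_one_of (d := z)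
    intro y hy
    rcases hzall y hy.1 with h1 | h1
    · exfalso
      exact hy.2.1 (by rw [h1]; exact hpD i (by omega))
    · exact h1
  -- leaves that are not kept: only ℓ
  have hleaf : ∀ v, IsLeaf N.Arc v → ¬ Keep N.Arc (ExtDel N.Arc u1 p) v → v = ℓ := by
    intro v hvleaf hvk
    have hnc : ∀ y, ¬ N.Arc v y := outdeg_zero_iff.1 hvleaf.2
    by_cases hDv : (ExtDel N.Arc u1 p) v
    · rcases (hDiff v).1 hDv with hmem | ⟨rfl, hh2⟩
      · obtain ⟨j, hj, hje⟩ := (hmemp v).1 hmem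
        rcases Nat.lt_or_ge (j+1) p.length with h2 | h2
        · exfalso
          have ha := harc j h2
          rw [hje] at ha
          exact hnc _ ha
        · have hjl : j = p.length - 1 := by omega
          subst hjl
          rw [hlastE] at hje
          exact hje.symm
      · exfalso
        have e1 := hvleaf.1
        have e2 := hh2.1
        omega
    · exfalso
      have hvE : Elem N.Arc (ExtDel N.Arc u1 p) v := by
        by_contra hvE
        exact hvk ⟨hDv, hvE⟩
      have h1 := hvE.2.1
      have h2 := sub_outdeg_le N.Arc (ExtDel N.Arc u1 p) v
      rw [hvleaf.2] at h2
      omega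
  have hnd : p.Nodup := List.nodup_iff_injective_get.2 (by
    intro i j hij
    exact Fin.ext (hnodup i.1 j.1 i.2 j.2 (by simpa [List.get_eq_getElem] using hij)))
  by_cases hqh : IsHybrid N.Arc q
  · -- CASE N.Arc : the parent of u1 is a hybrid node
    have hqD : (ExtDel N.Arc u1 p) q := (hDiff q).2 (Or.inr ⟨rfl, hqh⟩)
    have hqchild : ∀ y, N.Arc q y → y = u1 := by
      obtain ⟨d, hd, hdu⟩ := outdeg_one_unique hqh.2
      intro y hy
      rw [hdu y hy, ← hdu u1 hq]
    obtain ⟨a, b, hab, haarc, hbarc, hallpar⟩ := indeg_two_pair hqh.1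
    have hptree : ∀ x, N.Arc x q → IsTreeNode N.Arc x := by
      intro x hx
      rcases N.binary x with h1 | h1
      · exact h1
      · exfalso
        obtain ⟨w', hw1, hw2⟩ := N.treeChild x (by have := h1.2; omega)
        obtain ⟨d, hd, hdu⟩ := outdeg_one_unique h1.2
        have e1 : w' = d := hdu w' hw1
        have e2 : q = d := hdu q hx
        rw [e1, ← e2] at hw2
        exact tree_not_hybrid hw2 hqh
    have hpnotp : ∀ x, N.Arc x q → x ∉ p := by
      intro x hx hxp
      obtain ⟨j, hj, hje⟩ := (hmemp x).1 hxp
      apply N.acyclic u1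
      rcases Nat.eq_zero_or_pos j with rfl | hpos
      · have a1 : N.Arc u1 q := by rw [← hu0, hje]; exact hx
        exact (Relation.TransGen.single a1).tail hq
      · have t1 := htrans j hj 0 hpos
        rw [hu0] at t1
        have a1 : N.Arc (p[j]'hj) q := by rw [hje]; exact hx
        exact (t1.tail a1).tail hq
    have hpnotD : ∀ x, N.Arc x q → ¬ (ExtDel N.Arc u1 p) x := by
      intro x hx hDx
      rcases (hDiff x).1 hDx with hmem | ⟨he, _⟩
      · exact hpnotp x hx hmem
      · rw [he] at hx
        exact N.acyclic q (Relation.TransGen.single hx)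
    have hparElem : ∀ x, N.Arc x q → Elem N.Arc (ExtDel N.Arc u1 p) x := by
      intro x hx
      have hxt := hptree x hx
      have hxout : outdeg N.Arc x = 2 := by
        rcases hxt with ⟨_, h1⟩ | ⟨_, h1⟩ | ⟨_, h1⟩
        · exact absurd h1 (outdeg_ne_zero_of hx)
        · exact h1
        · exact h1
      obtain ⟨c, hc1, hc2, hc3⟩ := outdeg_two_other hxout hx
      have hcnotD : ¬ (ExtDel N.Arc u1 p) c := by
        intro hDc
        rcases (hDiff c).1 hDc with hmem | ⟨rfl, _⟩
        · obtain ⟨j, hj, hje⟩ := (hmemp c).1 hmem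
          rcases Nat.eq_zero_or_pos j with rfl | hpos
          · have harcx : N.Arc x u1 := by rw [← hu0, hje]; exact hc2
            have e := hqu x harcx
            rw [e] at hx
            exact N.acyclic q (Relation.TransGen.single hx)
          · have hpar := hparent j hpos hj x (by rw [hje]; exact hc2)
            exact hpnotp x hx (by rw [hpar]; exact List.getElem_mem (by omega))
        · exact hc1 rfl
      refine ⟨hpnotD x hx, outdeg_eq_one_of (d := c) ⟨hc2, hpnotD x hx, hcnotD⟩ ?_, ?_⟩
      · intro y hy
        rcases hc3 y hy.1 with rfl | rfl
        · exact absurd hqD hy.2.2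
        · rfl
      · refine le_trans (sub_indeg_le N.Arc (ExtDel N.Arc u1 p) x) ?_
        rcases hxt with ⟨h1, _⟩ | ⟨h1, _⟩ | ⟨h1, _⟩ <;> omega
    have hvElem : ∀ i (hi : i + 1 < p.length), Elem N.Arc (ExtDel N.Arc u1 p) (vf i) := by
      intro i hi
      obtain ⟨d, hd, hdu, hdnp⟩ := hvchild i hi
      have hdnotD : ¬ (ExtDel N.Arc u1 p) d := by
        intro hDd
        rcases (hDiff d).1 hDd with hmem | ⟨rfl, _⟩
        · exact hdnp hmem
        · exact tree_not_hybrid (hptree _ hd) (hvhyb i hi)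
      exact ⟨hvnotD i hi, outdeg_eq_one_of (d := d) ⟨hd, hvnotD i hi, hdnotD⟩
        (fun y hy => hdu y hy.1), hvsubin i hi⟩
    have hEchar : ∀ x, Elem N.Arc (ExtDel N.Arc u1 p) x ↔
        ((∃ i, ∃ hi : i + 1 < p.length, x = vf i) ∨ x = a ∨ x = b) := by
      intro x
      constructor
      · intro hx
        obtain ⟨hxnD, hxout, hxin⟩ := hx
        rcases N.binary x with hxt | hxh
        · have hxout2 : outdeg N.Arc x = 2 := by
            rcases hxt with ⟨_, h1⟩ | ⟨_, h1⟩ | ⟨_, h1⟩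
            · exfalso
              have h2 := sub_outdeg_le N.Arc (ExtDel N.Arc u1 p) x
              omega
            · exact h1
            · exact h1
          obtain ⟨c1, c2, hc12, hc1, hc2, hcall⟩ := outdeg_two_pair hxout2
          have key : ∀ c, N.Arc x c → (ExtDel N.Arc u1 p) c →
              (∃ i, ∃ hi : i + 1 < p.length, x = vf i) ∨ x = a ∨ x = b := by
            intro c hc hDc
            rcases (hDiff c).1 hDc with hmem | ⟨rfl, _⟩
            · obtain ⟨j, hj, hje⟩ := (hmemp c).1 hmem
              rcases Nat.eq_zero_or_pos j with rfl | hpos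
              · exfalso
                have harcx : N.Arc x u1 := by rw [← hu0, hje]; exact hc
                have e := hqu x harcx
                rw [e] at hxt
                exact tree_not_hybrid hxt hqh
              · exfalso
                have hpar := hparent j hpos hj x (by rw [hje]; exact hc)
                exact hxnD (by rw [hpar]; exact hpD (j-1) (by omega))
            · right
              exact hallpar x hc
          have hcD : (ExtDel N.Arc u1 p) c1 ∨ (ExtDel N.Arc u1 p) c2 := by
            by_contra hcc
            push_neg at hcc
            have h2 := two_le_outdeg (A := SubArc N.Arc (ExtDel N.Arc u1 p)) (v := x) hc12
              ⟨hc1, hxnD, hcc.1⟩ ⟨hc2, hxnD, hcc.2⟩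
            omega
          rcases hcD with h1 | h1
          · exact key c1 hc1 h1
          · exact key c2 hc2 h1
        · obtain ⟨y1, y2, hy12, hy1, hy2, hyall⟩ := indeg_two_pair hxh.1
          have key : ∀ y, N.Arc y x → (ExtDel N.Arc u1 p) y →
              (∃ i, ∃ hi : i + 1 < p.length, x = vf i) ∨ x = a ∨ x = b := by
            intro y hy hDy
            rcases (hDiff y).1 hDy with hmem | ⟨rfl, _⟩
            · obtain ⟨j, hj, hje⟩ := (hmemp y).1 hmem
              have hj1 : j + 1 < p.length := by
                rcases Nat.lt_or_ge (j+1) p.length with h2 | h2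
                · exact h2
                · exfalso
                  have hjl : j = p.length - 1 := by omega
                  subst hjl
                  rw [hlastE] at hje
                  rw [← hje] at hy
                  exact hℓnochild x hy
              rw [← hje] at hy
              rcases hvall j hj1 x hy with h1 | h2
              · exfalso
                exact hxnD (by rw [h1]; exact hpD (j+1) hj1)
              · exact Or.inl ⟨j, hj1, h2⟩
            · exfalso
              exact hxnD (by rw [hqchild x hy]; exact hu1D)
          have hyD : (ExtDel N.Arc u1 p) y1 ∨ (ExtDel N.Arc u1 p) y2 := by
            by_contra hyy
            push_neg at hyy
            have h2 := two_le_indeg (A := SubArc N.Arc (ExtDel N.Arc u1 p)) (v := x) hy12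
              ⟨hy1, hyy.1, hxnD⟩ ⟨hy2, hyy.2, hxnD⟩
            omega
          rcases hyD with h1 | h1
          · exact key y1 hy1 h1
          · exact key y2 hy2 h1
      · rintro (⟨i, hi, rfl⟩ | rfl | rfl)
        · exact hvElem i hi
        · exact hparElem _ haarc
        · exact hparElem _ hbarc
    -- cardinalities
    have hkD : Nat.card {v : V // (ExtDel N.Arc u1 p) v} = p.length + 1 := by
      have hiff : ∀ x, (ExtDel N.Arc u1 p) x ↔ x ∈ (insert q p.toFinset : Finset V) := by
        intro x
        rw [hDiff x, Finset.mem_insert, List.mem_toFinset]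
        constructor
        · rintro (h1 | ⟨rfl, _⟩)
          · exact Or.inr h1
          · exact Or.inl rfl
        · rintro (rfl | h1)
          · exact Or.inr ⟨rfl, hqh⟩
          · exact Or.inl h1
      rw [card_iff_congr hiff, Nat.card_eq_finsetCard,
        Finset.card_insert_of_notMem (by rw [List.mem_toFinset]; exact hqnotp),
        List.toFinset_card_of_nodup hnd]
    have hkE : Nat.card {v : V // Elem N.Arc (ExtDel N.Arc u1 p) v} = p.length + 1 := by
      have hdisj : Disjoint ((Finset.range (p.length - 1)).image vf) ({a, b} : Finset V) := by
        rw [Finset.disjoint_left]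
        intro x hx hx2
        simp only [Finset.mem_image, Finset.mem_range] at hx
        obtain ⟨i, hi, rfl⟩ := hx
        have htr : IsTreeNode N.Arc (vf i) → False :=
          fun ht' => tree_not_hybrid ht' (hvhyb i (by omega))
        simp only [Finset.mem_insert, Finset.mem_singleton] at hx2
        rcases hx2 with h1 | h1
        · rw [h1] at htr
          exact htr (hptree _ haarc)
        · rw [h1] at htr
          exact htr (hptree _ hbarc)
      have hinj : Set.InjOn vf ↑(Finset.range (p.length - 1)) := by
        intro i hi j hj hij
        simp only [Finset.coe_range, Set.mem_Iio] at hi hj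
        by_contra hne'
        exact hvinj i j (by omega) (by omega) hne' hij
      have hiff : ∀ x, Elem N.Arc (ExtDel N.Arc u1 p) x ↔
          x ∈ ((Finset.range (p.length - 1)).image vf ∪ {a, b} : Finset V) := by
        intro x
        rw [hEchar x]
        simp only [Finset.mem_union, Finset.mem_image, Finset.mem_range,
          Finset.mem_insert, Finset.mem_singleton]
        constructor
        · rintro (⟨i, hi, rfl⟩ | h1)
          · exact Or.inl ⟨i, by omega, rfl⟩
          · exact Or.inr h1
        · rintro (⟨i, hi, rfl⟩ | h1)
          · exact Or.inl ⟨i, by omega, rfl⟩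
          · exact Or.inr h1
      rw [card_iff_congr hiff, Nat.card_eq_finsetCard,
        Finset.card_union_of_disjoint hdisj, Finset.card_image_of_injOn hinj,
        Finset.card_range,
        Finset.card_insert_of_notMem (fun h1 => hab (Finset.mem_singleton.1 h1)),
        Finset.card_singleton]
      omega
    have hNKD : ∀ x y, Keep N.Arc (ExtDel N.Arc u1 p) x → N.Arc x y → ¬ (ExtDel N.Arc u1 p) y := by
      intro x y hkx hxy hDy
      rcases (hDiff y).1 hDy with hmem | ⟨rfl, _⟩
      · obtain ⟨j, hj, hje⟩ := (hmemp y).1 hmem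
        rcases Nat.eq_zero_or_pos j with rfl | hpos
        · have harcx : N.Arc x u1 := by rw [← hu0, hje]; exact hxy
          exact hkx.1 (by rw [hqu x harcx]; exact hqD)
        · have hpar := hparent j hpos hj x (by rw [hje]; exact hxy)
          exact hkx.1 (by rw [hpar]; exact hpD (j-1) (by omega))
      · exact hkx.2 (hparElem x hxy)
    exact main_count N (ExtDel N.Arc u1 p) ℓ hℓ hℓD N' hN' hleaf hNKD (by rw [hkE, hkD])
  · -- CASE B : the parent of u1 is a tree node
    have hqtree : IsTreeNode N.Arc q := (N.binary q).resolve_right hqh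
    have hDB : ∀ x, (ExtDel N.Arc u1 p) x ↔ x ∈ p := by
      intro x
      rw [hDiff x]
      constructor
      · rintro (h1 | ⟨rfl, hh2⟩)
        · exact h1
        · exact absurd hh2 hqh
      · exact Or.inl
    have hqnotD : ¬ (ExtDel N.Arc u1 p) q := fun h1 => hqnotp ((hDB q).1 h1)
    have hqout : outdeg N.Arc q = 2 := by
      rcases hqtree with ⟨_, h1⟩ | ⟨_, h1⟩ | ⟨_, h1⟩
      · exact absurd h1 (outdeg_ne_zero_of hq)
      · exact h1
      · exact h1
    obtain ⟨c, hc1, hc2, hc3⟩ := outdeg_two_other hqout hq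
    have hcnotD : ¬ (ExtDel N.Arc u1 p) c := by
      rw [hDB]
      intro hcp
      obtain ⟨j, hj, hje⟩ := (hmemp c).1 hcp
      rcases Nat.eq_zero_or_pos j with rfl | hpos
      · exact hc1 (by rw [← hje, hu0])
      · have hpar := hparent j hpos hj q (by rw [hje]; exact hc2)
        exact hqnotp (by rw [hpar]; exact List.getElem_mem (by omega))
    have hqElem : Elem N.Arc (ExtDel N.Arc u1 p) q := by
      refine ⟨hqnotD, outdeg_eq_one_of (d := c) ⟨hc2, hqnotD, hcnotD⟩ ?_, ?_⟩
      · intro y hy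
        rcases hc3 y hy.1 with rfl | rfl
        · exact absurd hu1D hy.2.2
        · rfl
      · refine le_trans (sub_indeg_le N.Arc (ExtDel N.Arc u1 p) q) ?_
        rcases hqtree with ⟨h1, _⟩ | ⟨h1, _⟩ | ⟨h1, _⟩ <;> omega
    have hvElem : ∀ i (hi : i + 1 < p.length), Elem N.Arc (ExtDel N.Arc u1 p) (vf i) := by
      intro i hi
      obtain ⟨d, hd, hdu, hdnp⟩ := hvchild i hi
      have hdnotD : ¬ (ExtDel N.Arc u1 p) d := fun h1 => hdnp ((hDB d).1 h1)
      exact ⟨hvnotD i hi, outdeg_eq_one_of (d := d) ⟨hd, hvnotD i hi, hdnotD⟩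
        (fun y hy => hdu y hy.1), hvsubin i hi⟩
    have hEchar : ∀ x, Elem N.Arc (ExtDel N.Arc u1 p) x ↔
        ((∃ i, ∃ hi : i + 1 < p.length, x = vf i) ∨ x = q) := by
      intro x
      constructor
      · intro hx
        obtain ⟨hxnD, hxout, hxin⟩ := hx
        rcases N.binary x with hxt | hxh
        · have hxout2 : outdeg N.Arc x = 2 := by
            rcases hxt with ⟨_, h1⟩ | ⟨_, h1⟩ | ⟨_, h1⟩
            · exfalso
              have h2 := sub_outdeg_le N.Arc (ExtDel N.Arc u1 p) x
              omega
            · exact h1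
            · exact h1
          obtain ⟨c1, c2, hc12, hcc1, hcc2, hcall⟩ := outdeg_two_pair hxout2
          have key : ∀ c', N.Arc x c' → (ExtDel N.Arc u1 p) c' →
              (∃ i, ∃ hi : i + 1 < p.length, x = vf i) ∨ x = q := by
            intro c' hc' hDc
            obtain ⟨j, hj, hje⟩ := (hmemp c').1 ((hDB c').1 hDc)
            rcases Nat.eq_zero_or_pos j with rfl | hpos
            · have harcx : N.Arc x u1 := by rw [← hu0, hje]; exact hc'
              exact Or.inr (hqu x harcx)
            · exfalso
              have hpar := hparent j hpos hj x (by rw [hje]; exact hc')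
              exact hxnD (by rw [hpar]; exact hpD (j-1) (by omega))
          have hcD : (ExtDel N.Arc u1 p) c1 ∨ (ExtDel N.Arc u1 p) c2 := by
            by_contra hcc
            push_neg at hcc
            have h2 := two_le_outdeg (A := SubArc N.Arc (ExtDel N.Arc u1 p)) (v := x) hc12
              ⟨hcc1, hxnD, hcc.1⟩ ⟨hcc2, hxnD, hcc.2⟩
            omega
          rcases hcD with h1 | h1
          · exact key c1 hcc1 h1
          · exact key c2 hcc2 h1
        · obtain ⟨y1, y2, hy12, hy1, hy2, hyall⟩ := indeg_two_pair hxh.1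
          have key : ∀ y, N.Arc y x → (ExtDel N.Arc u1 p) y →
              (∃ i, ∃ hi : i + 1 < p.length, x = vf i) ∨ x = q := by
            intro y hy hDy
            obtain ⟨j, hj, hje⟩ := (hmemp y).1 ((hDB y).1 hDy)
            have hj1 : j + 1 < p.length := by
              rcases Nat.lt_or_ge (j+1) p.length with h2 | h2
              · exact h2
              · exfalso
                have hjl : j = p.length - 1 := by omega
                subst hjl
                rw [hlastE] at hje
                rw [← hje] at hy
                exact hℓnochild x hy
            rw [← hje] at hy
            rcases hvall j hj1 x hy with h1 | h2
            · exfalso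
              exact hxnD (by rw [h1]; exact hpD (j+1) hj1)
            · exact Or.inl ⟨j, hj1, h2⟩
          have hyD : (ExtDel N.Arc u1 p) y1 ∨ (ExtDel N.Arc u1 p) y2 := by
            by_contra hyy
            push_neg at hyy
            have h2 := two_le_indeg (A := SubArc N.Arc (ExtDel N.Arc u1 p)) (v := x) hy12
              ⟨hy1, hyy.1, hxnD⟩ ⟨hy2, hyy.2, hxnD⟩
            omega
          rcases hyD with h1 | h1
          · exact key y1 hy1 h1
          · exact key y2 hy2 h1
      · rintro (⟨i, hi, rfl⟩ | rfl)
        · exact hvElem i hi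
        · exact hqElem
    have hkD : Nat.card {v : V // (ExtDel N.Arc u1 p) v} = p.length := by
      have hiff : ∀ x, (ExtDel N.Arc u1 p) x ↔ x ∈ p.toFinset := by
        intro x
        rw [hDB x, List.mem_toFinset]
      rw [card_iff_congr hiff, Nat.card_eq_finsetCard, List.toFinset_card_of_nodup hnd]
    have hkE : Nat.card {v : V // Elem N.Arc (ExtDel N.Arc u1 p) v} = p.length := by
      have hdisj : Disjoint ((Finset.range (p.length - 1)).image vf) ({q} : Finset V) := by
        rw [Finset.disjoint_left]
        intro x hx hx2
        simp only [Finset.mem_image, Finset.mem_range] at hx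
        obtain ⟨i, hi, rfl⟩ := hx
        rw [Finset.mem_singleton] at hx2
        exact hvq i (by omega) hx2
      have hinj : Set.InjOn vf ↑(Finset.range (p.length - 1)) := by
        intro i hi j hj hij
        simp only [Finset.coe_range, Set.mem_Iio] at hi hj
        by_contra hne'
        exact hvinj i j (by omega) (by omega) hne' hij
      have hiff : ∀ x, Elem N.Arc (ExtDel N.Arc u1 p) x ↔
          x ∈ ((Finset.range (p.length - 1)).image vf ∪ {q} : Finset V) := by
        intro x
        rw [hEchar x]
        simp only [Finset.mem_union, Finset.mem_image, Finset.mem_range,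
          Finset.mem_singleton]
        constructor
        · rintro (⟨i, hi, rfl⟩ | h1)
          · exact Or.inl ⟨i, by omega, rfl⟩
          · exact Or.inr h1
        · rintro (⟨i, hi, rfl⟩ | h1)
          · exact Or.inl ⟨i, by omega, rfl⟩
          · exact Or.inr h1
      rw [card_iff_congr hiff, Nat.card_eq_finsetCard,
        Finset.card_union_of_disjoint hdisj, Finset.card_image_of_injOn hinj,
        Finset.card_range, Finset.card_singleton]
      omega
    have hNKD : ∀ x y, Keep N.Arc (ExtDel N.Arc u1 p) x → N.Arc x y → ¬ (ExtDel N.Arc u1 p) y := by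
      intro x y hkx hxy hDy
      obtain ⟨j, hj, hje⟩ := (hmemp y).1 ((hDB y).1 hDy)
      rcases Nat.eq_zero_or_pos j with rfl | hpos
      · have harcx : N.Arc x u1 := by rw [← hu0, hje]; exact hxy
        have e := hqu x harcx
        rw [e] at hkx
        exact hkx.2 hqElem
      · have hpar := hparent j hpos hj x (by rw [hje]; exact hxy)
        exact hkx.1 (by rw [hpar]; exact hpD (j-1) (by omega))
    exact main_count N (ExtDel N.Arc u1 p) ℓ hℓ hℓD N' hN' hleaf hNKD (by rw [hkE, hkD])
end
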